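/- arXiv:1607.00781 — 11 statements merged into one kernel-verified Lean document; each statement's English description precedes it below -/
import Mathlib

section
/- Let γ₁, η₁ > 0 and a, c ∈ (0,1), and set γ_n = γ₁ n^{−a}, η_n = η₁ n^{−c}, H_n = η₁ + ⋯ + η_n, Γ_n = γ₁ + ⋯ + γ_n. Then (η_n, γ_n) is an averaging system, i.e.: H_n → +∞ and Γ_n → +∞ as n → ∞; ∑_{n≥2} (1/H_n)·max(η_n/γ_n − η_{n−1}/γ_{n−1}, 0) < +∞; and ∑_{n≥1} (η_n/(H_n √γ_n))² < +∞. -/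
/-!
A nonincreasing power law `b k^{-p}` has partial sums at least `n` times their last term, so
`H_n ≥ η₁ n^{1-c}` and `Γ_n ≥ γ₁ n^{1-a}`, which diverge. Since `η_n / γ_n = (η₁/γ₁) n^{a-c}`,
Bernoulli's inequality bounds the positive part of its increments by `(η₁/γ₁) n^{a-c-1}`.
Combined with the lower bound on `H_n`, both series are dominated by a multiple of `n^{a-2}`,
which is summable because `a < 1`.
-/

open Filter Finset

lemma natCast_mul_le_sum_Icc {f : ℕ → ℝ} {n : ℕ} (hf : ∀ k ∈ Icc 1 n, f n ≤ f k) :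
    n * f n ≤ ∑ k ∈ Icc 1 n, f k := by
  simpa using card_nsmul_le_sum (Icc 1 n) f (f n) hf

section PowerLaw

variable {b p : ℝ} {f : ℕ → ℝ}

lemma natCast_mul_le_sum_Icc_of_eq_rpow_neg (hb : 0 ≤ b) (hp : 0 ≤ p)
    (hf : ∀ k, 1 ≤ k → f k = b * (k : ℝ) ^ (-p)) (n : ℕ) :
    n * (b * (n : ℝ) ^ (-p)) ≤ ∑ k ∈ Icc 1 n, f k := by
  rcases Nat.eq_zero_or_pos n with rfl | hn
  · simp
  rw [← hf n hn]
  refine natCast_mul_le_sum_Icc fun k hk => ?_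
  obtain ⟨hk1, hkn⟩ := mem_Icc.mp hk
  rw [hf n hn, hf k hk1]
  have hk0 : (0 : ℝ) < k := by exact_mod_cast hk1
  exact mul_le_mul_of_nonneg_left
    (Real.rpow_le_rpow_of_nonpos hk0 (by exact_mod_cast hkn) (by linarith)) hb

lemma tendsto_sum_Icc_of_eq_rpow_neg (hb : 0 < b) (hp0 : 0 ≤ p) (hp1 : p < 1)
    (hf : ∀ k, 1 ≤ k → f k = b * (k : ℝ) ^ (-p)) :
    Tendsto (fun n => ∑ k ∈ Icc 1 n, f k) atTop atTop := by
  have hpow : Tendsto (fun n : ℕ => b * (n : ℝ) ^ (1 - p)) atTop atTop :=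
    ((tendsto_rpow_atTop (by linarith)).comp tendsto_natCast_atTop_atTop).const_mul_atTop hb
  refine tendsto_atTop_mono' atTop ?_ hpow
  filter_upwards [eventually_gt_atTop 0] with n hn
  have hn' : (0 : ℝ) < n := by exact_mod_cast hn
  calc b * (n : ℝ) ^ (1 - p) = n * (b * (n : ℝ) ^ (-p)) := by
        rw [sub_eq_add_neg, Real.rpow_add hn', Real.rpow_one]; ring
    _ ≤ _ := natCast_mul_le_sum_Icc_of_eq_rpow_neg hb.le hp0 hf n

end PowerLaw

lemma max_add_one_rpow_sub_rpow_le {x q : ℝ} (hx : 0 < x) (hq : q ≤ 1) :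
    max ((x + 1) ^ q - x ^ q) 0 ≤ x ^ q / x := by
  refine max_le ?_ (by positivity)
  rcases le_or_gt q 0 with hq0 | hq0
  · have : (x + 1) ^ q ≤ x ^ q := Real.rpow_le_rpow_of_nonpos hx (by linarith) hq0
    have : 0 ≤ x ^ q / x := by positivity
    linarith
  · have hbern : (1 + 1 / x) ^ q ≤ 1 + q * (1 / x) :=
      rpow_one_add_le_one_add_mul_self (by linarith [one_div_pos.mpr hx]) hq0.le hq
    have hqx : q * (1 / x) ≤ 1 / x := by
      have : 0 < 1 / x := by positivity
      nlinarith
    calc (x + 1) ^ q - x ^ q = x ^ q * ((1 + 1 / x) ^ q - 1) := by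
          rw [mul_sub, mul_one, ← Real.mul_rpow hx.le (by positivity), mul_one_add,
            mul_one_div_cancel hx.ne']
      _ ≤ x ^ q * (1 / x) := by gcongr; linarith
      _ = x ^ q / x := by ring

lemma summable_inv_rpow_neg_div_sq {a : ℝ} (ha : a < 1) :
    Summable fun n : ℕ => (((n : ℝ) + 1) ^ (-a))⁻¹ / ((n : ℝ) + 1) ^ 2 := by
  have h := (summable_nat_add_iff 1).mpr (Real.summable_nat_rpow.mpr (by linarith : a - 2 < -1))
  refine h.congr fun n => ?_
  have hx : (0 : ℝ) < (n : ℝ) + 1 := by positivity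
  push_cast
  rw [Real.rpow_sub hx, Real.rpow_neg hx.le, inv_inv, Real.rpow_two]

section AveragingSystem

variable {γ₁ η₁ a c : ℝ} {γ η H : ℕ → ℝ}

lemma succ_mul_le_of_eq_sum_Icc (hη₁ : 0 ≤ η₁) (hc : 0 ≤ c)
    (hη : ∀ n : ℕ, 1 ≤ n → η n = η₁ * (n : ℝ) ^ (-c))
    (hH : ∀ n : ℕ, H n = ∑ k ∈ Icc 1 n, η k) (n : ℕ) :
    ((n : ℝ) + 1) * (η₁ * ((n : ℝ) + 1) ^ (-c)) ≤ H (n + 1) := by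
  simpa [hH] using natCast_mul_le_sum_Icc_of_eq_rpow_neg hη₁ hc hη (n + 1)

lemma summable_one_div_mul_max_div_sub_div (hγ₁ : 0 < γ₁) (hη₁ : 0 < η₁) (ha : a < 1)
    (hc : 0 ≤ c) (hγ : ∀ n : ℕ, 1 ≤ n → γ n = γ₁ * (n : ℝ) ^ (-a))
    (hη : ∀ n : ℕ, 1 ≤ n → η n = η₁ * (n : ℝ) ^ (-c))
    (hH : ∀ n : ℕ, H n = ∑ k ∈ Icc 1 n, η k) :
    Summable fun n : ℕ =>
      (1 / H (n + 2)) * max (η (n + 2) / γ (n + 2) - η (n + 1) / γ (n + 1)) 0 := by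
  have hratio : ∀ k : ℕ, 1 ≤ k → η k / γ k = η₁ / γ₁ * ((k : ℝ) ^ (-c) / (k : ℝ) ^ (-a)) := by
    intro k hk
    rw [hη k hk, hγ k hk]
    ring
  have hHlow (n : ℕ) : ((n : ℝ) + 1) * (η₁ * ((n : ℝ) + 1) ^ (-c)) ≤ H (n + 2) := by
    refine (succ_mul_le_of_eq_sum_Icc hη₁.le hc hη hH n).trans ?_
    rw [hH (n + 2), sum_Icc_succ_top (show 1 ≤ n + 2 by omega), ← hH, hη (n + 2) (by omega),
      le_add_iff_nonneg_right]
    positivity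
  refine .of_nonneg_of_le (fun n => ?_) (fun n => ?_)
    ((summable_inv_rpow_neg_div_sq ha).mul_left γ₁⁻¹)
  · have : 0 < H (n + 2) := lt_of_lt_of_le (by positivity) (hHlow n)
    positivity
  · set x : ℝ := n + 1
    have hx : 0 < x := by positivity
    have hincr := max_add_one_rpow_sub_rpow_le hx (q := -c - -a) (by linarith)
    rw [Real.rpow_sub hx, Real.rpow_sub (by positivity)] at hincr
    have hcast1 : ((n + 1 : ℕ) : ℝ) = x := by push_cast; rfl
    have hcast2 : ((n + 2 : ℕ) : ℝ) = x + 1 := by push_cast; ring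
    rw [hratio (n + 2) (by omega), hratio (n + 1) (by omega), hcast1, hcast2, ← mul_sub]
    have hK : 0 ≤ η₁ / γ₁ := by positivity
    calc 1 / H (n + 2) * max (η₁ / γ₁ * ((x + 1) ^ (-c) / (x + 1) ^ (-a) - x ^ (-c) / x ^ (-a))) 0
        ≤ 1 / (x * (η₁ * x ^ (-c))) * (η₁ / γ₁ * (x ^ (-c) / x ^ (-a) / x)) := by
          refine mul_le_mul (one_div_le_one_div_of_le (by positivity) (hHlow n))
            (max_le ?_ (by positivity)) (le_max_right _ _) (by positivity)
          exact mul_le_mul_of_nonneg_left ((le_max_left _ _).trans hincr) hK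
      _ = γ₁⁻¹ * ((x ^ (-a))⁻¹ / x ^ 2) := by
          field_simp

lemma summable_sq_div_mul_sqrt (hγ₁ : 0 < γ₁) (hη₁ : 0 < η₁) (ha : a < 1)
    (hc : 0 ≤ c) (hγ : ∀ n : ℕ, 1 ≤ n → γ n = γ₁ * (n : ℝ) ^ (-a))
    (hη : ∀ n : ℕ, 1 ≤ n → η n = η₁ * (n : ℝ) ^ (-c))
    (hH : ∀ n : ℕ, H n = ∑ k ∈ Icc 1 n, η k) :
    Summable fun n : ℕ => (η (n + 1) / (H (n + 1) * Real.sqrt (γ (n + 1)))) ^ 2 := by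
  refine .of_nonneg_of_le (fun n => by positivity) (fun n => ?_)
    ((summable_inv_rpow_neg_div_sq ha).mul_left γ₁⁻¹)
  set x : ℝ := n + 1 with hx_def
  have hx : 0 < x := by positivity
  have hcast : ((n + 1 : ℕ) : ℝ) = x := by push_cast; rfl
  have hHlow := succ_mul_le_of_eq_sum_Icc hη₁.le hc hη hH n
  rw [← hx_def] at hHlow
  rw [div_pow, mul_pow, Real.sq_sqrt (hγ (n + 1) (by omega) ▸ by positivity),
    hη (n + 1) (by omega), hγ (n + 1) (by omega), hcast]
  calc (η₁ * x ^ (-c)) ^ 2 / (H (n + 1) ^ 2 * (γ₁ * x ^ (-a)))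
      ≤ (η₁ * x ^ (-c)) ^ 2 / ((x * (η₁ * x ^ (-c))) ^ 2 * (γ₁ * x ^ (-a))) := by gcongr
    _ = γ₁⁻¹ * ((x ^ (-a))⁻¹ / x ^ 2) := by field_simp

end AveragingSystem

/-- For polynomially decaying steps `γ n = γ₁ n^{-a}` and weights `η n = η₁ n^{-c}`
with `a, c ∈ (0,1)`, the pair `(η, γ)` is an averaging system. -/
theorem stmt_0 (γ₁ η₁ a c : ℝ) (hγ₁ : 0 < γ₁) (hη₁ : 0 < η₁)
    (ha : a ∈ Set.Ioo (0 : ℝ) 1) (hc : c ∈ Set.Ioo (0 : ℝ) 1)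
    (γ η H Γ : ℕ → ℝ)
    (hγ : ∀ n : ℕ, 1 ≤ n → γ n = γ₁ * (n : ℝ) ^ (-a))
    (hη : ∀ n : ℕ, 1 ≤ n → η n = η₁ * (n : ℝ) ^ (-c))
    (hH : ∀ n : ℕ, H n = ∑ k ∈ Finset.Icc 1 n, η k)
    (hΓ : ∀ n : ℕ, Γ n = ∑ k ∈ Finset.Icc 1 n, γ k) :
    Tendsto H atTop atTop ∧ Tendsto Γ atTop atTop ∧
    Summable (fun n : ℕ => (1 / H (n + 2)) *
      max (η (n + 2) / γ (n + 2) - η (n + 1) / γ (n + 1)) 0) ∧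
    Summable (fun n : ℕ => (η (n + 1) / (H (n + 1) * Real.sqrt (γ (n + 1)))) ^ 2) := by
  refine ⟨?_, ?_, summable_one_div_mul_max_div_sub_div hγ₁ hη₁ ha.2 hc.1.le hγ hη hH,
    summable_sq_div_mul_sqrt hγ₁ hη₁ ha.2 hc.1.le hγ hη hH⟩
  · exact (tendsto_sum_Icc_of_eq_rpow_neg hη₁ hc.1.le hc.2 hη).congr fun n => (hH n).symm
  · exact (tendsto_sum_Icc_of_eq_rpow_neg hγ₁ ha.1.le ha.2 hγ).congr fun n => (hΓ n).symm
end

section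
/- Fix an integer R ≥ 2, an integer M ≥ 2, a real a ∈ (0,1), and positive reals q₁,…,q_R with q₁ + ⋯ + q_R = 1 such that the nodes x_r := M^{−(r−2)} (q₁/q_r)^a, r = 2,…,R, are pairwise distinct. Then the weight system has a unique solution (W₁,…,W_R), and it is given by W₁ = 1 and, for r = 2,…,R, W_r = M^{r−2} (q_r/q₁)^a · ∑_{k=0}^∞ M^{−k} ∏_{s=2, s≠r}^{R} (1 − M^{s−2−k}(q_s/q₁)^a)/(1 − M^{s−r}(q_s/q_r)^a), where the series converges absolutely. -/
/-! With the nodes `x_r = M^{-(r-2)} (q₁/q_r)^a`, equation `ℓ = j + 2` of the weight system says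
that `V_r = W_r x_r` satisfies `∑_r V_r x_r^j = (1 - M^{-(j+1)})⁻¹ = ∑_k M^{-k} (M^{-k})^j` for
`j = 0, …, R - 2`. For distinct nodes this Vandermonde system has at most one solution, and
expanding `(M^{-k})^j` by Lagrange interpolation at the nodes shows that
`V_r = ∑_k M^{-k} L_r(M^{-k})` solves it, `L_r` being the Lagrange basis polynomial of `x_r`; the
series converges absolutely because `L_r` is bounded on `[0, 1]`. -/

open Finset Polynomial

section Lagrange

variable {F ι : Type*} [Field F] [DecidableEq ι] {s : Finset ι} {v : ι → F}

theorem Lagrange.eval_basis_eq_prod (r : ι) (t : F) :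
    (Lagrange.basis s v r).eval t = ∏ i ∈ s.erase r, (t - v i) / (v r - v i) := by
  rw [Lagrange.basis, eval_prod]
  refine prod_congr rfl fun i _ => ?_
  simp [Lagrange.basisDivisor, inv_mul_eq_div]

theorem sum_pow_mul_prod_div_eq_pow (hv : Set.InjOn v s) {j : ℕ} (hj : j < #s) (t : F) :
    ∑ r ∈ s, v r ^ j * ∏ i ∈ s.erase r, (t - v i) / (v r - v i) = t ^ j := by
  have hdeg : (X ^ j : F[X]).degree < #s := by
    rw [degree_X_pow]; exact_mod_cast hj
  have h := congrArg (eval t) (Lagrange.eq_interpolate hv hdeg)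
  simp only [Lagrange.interpolate_apply, eval_pow, eval_X, eval_finsetSum, eval_mul, eval_C,
    Lagrange.eval_basis_eq_prod] at h
  exact h.symm

/-- Pairing with the Lagrange basis polynomial of `r` isolates `V r`. -/
theorem eq_zero_of_forall_sum_mul_pow_eq_zero (hv : Set.InjOn v s) {V : ι → F}
    (h : ∀ j < #s, ∑ r ∈ s, V r * v r ^ j = 0) {r : ι} (hr : r ∈ s) : V r = 0 := by
  set p := Lagrange.basis s v r
  have hdeg : p.natDegree < #s := by
    rw [Lagrange.natDegree_basis hv hr]
    exact Nat.sub_lt (card_pos.mpr ⟨r, hr⟩) one_pos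
  have hpair : ∑ t ∈ s, V t * p.eval (v t) = V r := by
    rw [← add_sum_erase _ _ hr, Lagrange.eval_basis_self hv hr, mul_one, add_eq_left]
    refine sum_eq_zero fun t ht => ?_
    rw [Lagrange.eval_basis_of_ne (ne_of_mem_erase ht).symm (mem_of_mem_erase ht), mul_zero]
  rw [← hpair]
  simp_rw [eval_eq_sum_range' hdeg, mul_sum]
  rw [sum_comm]
  refine sum_eq_zero fun j hj => ?_
  rw [← mul_zero (p.coeff j), ← h j (mem_range.mp hj), mul_sum]
  exact sum_congr rfl fun t _ => by ring

end Lagrange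

section GeometricNodes

variable {ι : Type*} [DecidableEq ι] {s : Finset ι} {v : ι → ℝ} {t : ℝ}

noncomputable def lagrangeGeomTerm (s : Finset ι) (v : ι → ℝ) (t : ℝ) (r : ι) (k : ℕ) : ℝ :=
  t ^ k * ∏ i ∈ s.erase r, (t ^ k - v i) / (v r - v i)

theorem summable_lagrangeGeomTerm (ht : |t| < 1) (r : ι) :
    Summable (lagrangeGeomTerm s v t r) := by
  set C := ∏ i ∈ s.erase r, (1 + |v i|) / |v r - v i|
  refine Summable.of_norm_bounded ((summable_geometric_of_lt_one (abs_nonneg t) ht).mul_left C)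
    fun k => ?_
  have htk : |t| ^ k ≤ 1 := pow_le_one₀ (abs_nonneg t) ht.le
  rw [Real.norm_eq_abs, lagrangeGeomTerm, abs_mul, abs_pow, mul_comm, abs_prod]
  refine mul_le_mul_of_nonneg_right (prod_le_prod (fun i _ => abs_nonneg _) fun i _ => ?_)
    (by positivity)
  rw [abs_div]
  refine div_le_div_of_nonneg_right ?_ (abs_nonneg _)
  calc |t ^ k - v i| ≤ |t ^ k| + |v i| := abs_sub _ _
    _ ≤ 1 + |v i| := by rw [abs_pow]; gcongr

/-- Interchanging the sums, the Lagrange interpolation of `x ^ j` at `x = t ^ k` leaves the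
geometric series of `t ^ (j + 1)`. -/
theorem sum_tsum_lagrangeGeomTerm_mul_pow (hv : Set.InjOn v s) (ht : |t| < 1) {j : ℕ}
    (hj : j < #s) :
    ∑ r ∈ s, (∑' k, lagrangeGeomTerm s v t r k) * v r ^ j = (1 - t ^ (j + 1))⁻¹ := by
  have hsumm : ∀ r ∈ s, Summable fun k => lagrangeGeomTerm s v t r k * v r ^ j :=
    fun r _ => (summable_lagrangeGeomTerm ht r).mul_right _
  have hterm (k : ℕ) : ∑ r ∈ s, lagrangeGeomTerm s v t r k * v r ^ j = (t ^ (j + 1)) ^ k := by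
    calc ∑ r ∈ s, lagrangeGeomTerm s v t r k * v r ^ j
        = t ^ k * ∑ r ∈ s, v r ^ j * ∏ i ∈ s.erase r, (t ^ k - v i) / (v r - v i) := by
          rw [mul_sum]
          exact sum_congr rfl fun r _ => by rw [lagrangeGeomTerm]; ring
      _ = (t ^ (j + 1)) ^ k := by
          rw [sum_pow_mul_prod_div_eq_pow hv hj, ← pow_mul, ← pow_mul, ← pow_add]; ring_nf
  simp_rw [← tsum_mul_right]
  rw [← Summable.tsum_finsetSum hsumm, tsum_congr hterm, tsum_geometric_of_abs_lt_one]
  rw [abs_pow]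
  exact pow_lt_one₀ (abs_nonneg t) ht (Nat.succ_ne_zero j)

end GeometricNodes

theorem abs_inv_natCast_lt_one {M : ℕ} (hM : 1 < M) : |(M : ℝ)⁻¹| < 1 := by
  rw [abs_inv, Nat.abs_cast]
  exact inv_lt_one_of_one_lt₀ (by exact_mod_cast hM)

theorem one_sub_div_div_one_sub_div {K : Type*} [Field K] {x : K} (hx : x ≠ 0) (t y : K) :
    (1 - t / x) / (1 - y / x) = (t - x) / (y - x) := by
  rw [one_sub_div hx, one_sub_div hx, div_div_div_cancel_right₀ hx, ← neg_sub x t, ← neg_sub x y,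
    neg_div_neg_eq]

section WeightSystem

variable {R M : ℕ} {a : ℝ} {q W : ℕ → ℝ}

noncomputable def weightNode (M : ℕ) (a : ℝ) (q : ℕ → ℝ) (r : ℕ) : ℝ :=
  (M : ℝ) ^ (-((r : ℝ) - 2)) * (q 1 / q r) ^ a

def IsWeightSolution (R M : ℕ) (a : ℝ) (q W : ℕ → ℝ) : Prop :=
  (∀ r, r ∉ Icc 1 R → W r = 0) ∧ W 1 = 1 ∧
    ∀ ℓ ∈ Icc 2 R,
      W 1 * q 1 ^ (-(a * ((ℓ : ℝ) - 1))) +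
        ((M : ℝ) ^ ((1 : ℝ) - (ℓ : ℝ)) - 1) *
          ∑ r ∈ Icc 2 R, W r * (M : ℝ) ^ (-(((r : ℝ) - 2) * ((ℓ : ℝ) - 1))) *
            q r ^ (-(a * ((ℓ : ℝ) - 1))) = 0

noncomputable def weightSolution (R M : ℕ) (a : ℝ) (q : ℕ → ℝ) (r : ℕ) : ℝ :=
  if r ∈ Icc 2 R then
    (∑' k, lagrangeGeomTerm (Icc 2 R) (weightNode M a q) (M : ℝ)⁻¹ r k) / weightNode M a q r
  else if r = 1 then 1 else 0

theorem weightNode_pos (hM : 0 < M) (h1 : 0 < q 1) {r : ℕ} (hr : 0 < q r) :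
    0 < weightNode M a q r :=
  mul_pos (Real.rpow_pos_of_pos (Nat.cast_pos.mpr hM) _) (Real.rpow_pos_of_pos (div_pos h1 hr) _)

theorem inv_weightNode {r : ℕ} (h1 : 0 < q 1) (hr : 0 < q r) :
    (weightNode M a q r)⁻¹ = (M : ℝ) ^ ((r : ℝ) - 2) * (q r / q 1) ^ a := by
  rw [weightNode, mul_inv, ← Real.rpow_neg (Nat.cast_nonneg M), neg_neg,
    ← Real.inv_rpow (div_pos h1 hr).le, inv_div]

theorem rpow_mul_rpow_eq_weightNode_rpow {r : ℕ} (h1 : 0 < q 1) (hr : 0 < q r) (b : ℝ) :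
    (M : ℝ) ^ (-(((r : ℝ) - 2) * b)) * q r ^ (-(a * b)) =
      q 1 ^ (-(a * b)) * weightNode M a q r ^ b := by
  rw [weightNode, Real.mul_rpow (by positivity) (by positivity), neg_mul_eq_neg_mul,
    ← Real.rpow_mul (Nat.cast_nonneg M), ← Real.rpow_mul (div_pos h1 hr).le,
    Real.div_rpow h1.le hr.le, Real.rpow_neg h1.le, Real.rpow_neg hr.le]
  have : q r ^ (a * b) ≠ 0 := by positivity
  field_simp

theorem rpow_mul_prod_eq_lagrangeGeomTerm (hM : 0 < M) (h1 : 0 < q 1)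
    (hqs : ∀ r ∈ Icc 2 R, 0 < q r) {r : ℕ} (hr : r ∈ Icc 2 R) :
    (fun k : ℕ => (M : ℝ) ^ (-(k : ℝ)) *
      ∏ s ∈ (Icc 2 R).erase r,
        (1 - (M : ℝ) ^ ((s : ℝ) - 2 - (k : ℝ)) * (q s / q 1) ^ a) /
          (1 - (M : ℝ) ^ ((s : ℝ) - (r : ℝ)) * (q s / q r) ^ a)) =
      lagrangeGeomTerm (Icc 2 R) (weightNode M a q) (M : ℝ)⁻¹ r := by
  have hM' : (0 : ℝ) < M := by exact_mod_cast hM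
  funext k
  have hpow : (M : ℝ) ^ (-(k : ℝ)) = ((M : ℝ)⁻¹) ^ k := by
    rw [Real.rpow_neg hM'.le, Real.rpow_natCast, inv_pow]
  rw [lagrangeGeomTerm, hpow]
  congr 1
  refine prod_congr rfl fun s hs => ?_
  have hqs' := hqs s (mem_of_mem_erase hs)
  have hr' := hqs r hr
  have hnum : (M : ℝ) ^ ((s : ℝ) - 2 - (k : ℝ)) * (q s / q 1) ^ a =
      ((M : ℝ)⁻¹) ^ k / weightNode M a q s := by
    rw [div_eq_mul_inv _ (weightNode M a q s), inv_weightNode h1 hqs', ← hpow,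
      sub_eq_neg_add _ (k : ℝ), Real.rpow_add hM']
    ring
  have hden : (M : ℝ) ^ ((s : ℝ) - (r : ℝ)) * (q s / q r) ^ a =
      weightNode M a q r / weightNode M a q s := by
    rw [div_eq_mul_inv _ (weightNode M a q s), inv_weightNode h1 hqs', weightNode,
      show (s : ℝ) - r = -((r : ℝ) - 2) + ((s : ℝ) - 2) by ring, Real.rpow_add hM',
      show q s / q r = q 1 / q r * (q s / q 1) by field_simp,
      Real.mul_rpow (div_pos h1 hr').le (div_pos hqs' h1).le]
    ring
  rw [hnum, hden, one_sub_div_div_one_sub_div (weightNode_pos hM h1 hqs').ne']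

/-- The factor `q₁^{-a(j+1)}` cancels. -/
theorem weightEquation_iff (hM : 1 < M) (h1 : 0 < q 1) (hqs : ∀ r ∈ Icc 2 R, 0 < q r)
    (hW1 : W 1 = 1) (j : ℕ) :
    W 1 * q 1 ^ (-(a * (((j + 2 : ℕ) : ℝ) - 1))) +
        ((M : ℝ) ^ ((1 : ℝ) - ((j + 2 : ℕ) : ℝ)) - 1) *
          ∑ r ∈ Icc 2 R, W r * (M : ℝ) ^ (-(((r : ℝ) - 2) * (((j + 2 : ℕ) : ℝ) - 1))) *
            q r ^ (-(a * (((j + 2 : ℕ) : ℝ) - 1))) = 0 ↔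
      ∑ r ∈ Icc 2 R, W r * weightNode M a q r * weightNode M a q r ^ j =
        (1 - ((M : ℝ)⁻¹) ^ (j + 1))⁻¹ := by
  have hexp : ((j + 2 : ℕ) : ℝ) - 1 = ((j + 1 : ℕ) : ℝ) := by push_cast; ring
  have hMpow : (M : ℝ) ^ ((1 : ℝ) - ((j + 2 : ℕ) : ℝ)) = ((M : ℝ)⁻¹) ^ (j + 1) := by
    rw [show (1 : ℝ) - ((j + 2 : ℕ) : ℝ) = -((j + 1 : ℕ) : ℝ) by push_cast; ring,
      Real.rpow_neg (Nat.cast_nonneg M), Real.rpow_natCast, inv_pow]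
  rw [hexp, hMpow, hW1, one_mul]
  set Q := q 1 ^ (-(a * ((j + 1 : ℕ) : ℝ)))
  set S := ∑ r ∈ Icc 2 R, W r * weightNode M a q r * weightNode M a q r ^ j
  have hsum : ∑ r ∈ Icc 2 R, W r * (M : ℝ) ^ (-(((r : ℝ) - 2) * ((j + 1 : ℕ) : ℝ))) *
      q r ^ (-(a * ((j + 1 : ℕ) : ℝ))) = Q * S := by
    rw [mul_sum]
    refine sum_congr rfl fun r hr => ?_
    rw [mul_assoc, rpow_mul_rpow_eq_weightNode_rpow h1 (hqs r hr), Real.rpow_natCast]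
    ring
  have hQ : Q ≠ 0 := (Real.rpow_pos_of_pos h1 _).ne'
  have hc : 1 - ((M : ℝ)⁻¹) ^ (j + 1) ≠ 0 :=
    sub_ne_zero.mpr (pow_lt_one₀ (by positivity)
      (inv_lt_one_of_one_lt₀ (by exact_mod_cast hM)) j.succ_ne_zero).ne'
  rw [hsum, ← mul_eq_one_iff_eq_inv₀ hc,
    show Q + (((M : ℝ)⁻¹) ^ (j + 1) - 1) * (Q * S) =
      Q * (1 - S * (1 - ((M : ℝ)⁻¹) ^ (j + 1))) by ring,
    mul_eq_zero, or_iff_right hQ, sub_eq_zero, eq_comm]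

variable (hM : 1 < M) (h1 : 0 < q 1) (hqs : ∀ r ∈ Icc 2 R, 0 < q r)
  (hinj : Set.InjOn (weightNode M a q) (Icc 2 R))
include hM h1 hqs hinj

theorem IsWeightSolution.mul_weightNode_eq_tsum (hW : IsWeightSolution R M a q W) {r : ℕ}
    (hr : r ∈ Icc 2 R) :
    W r * weightNode M a q r =
      ∑' k, lagrangeGeomTerm (Icc 2 R) (weightNode M a q) (M : ℝ)⁻¹ r k := by
  refine sub_eq_zero.mp (eq_zero_of_forall_sum_mul_pow_eq_zero hinj
    (V := fun r => W r * weightNode M a q r -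
      ∑' k, lagrangeGeomTerm (Icc 2 R) (weightNode M a q) (M : ℝ)⁻¹ r k) (fun j hj => ?_) hr)
  have hj2 : j + 2 ∈ Icc 2 R := by
    rw [Nat.card_Icc] at hj
    exact mem_Icc.mpr ⟨by omega, by omega⟩
  simp_rw [sub_mul]
  rw [sum_sub_distrib, (weightEquation_iff hM h1 hqs hW.2.1 j).mp (hW.2.2 _ hj2),
    sum_tsum_lagrangeGeomTerm_mul_pow hinj (abs_inv_natCast_lt_one hM) hj, sub_self]

theorem isWeightSolution_weightSolution (hR : 1 ≤ R) :
    IsWeightSolution R M a q (weightSolution R M a q) := by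
  have hW1 : weightSolution R M a q 1 = 1 := by simp [weightSolution]
  refine ⟨fun r hr => ?_, hW1, fun ℓ hℓ => ?_⟩
  · rw [mem_Icc] at hr
    rw [weightSolution, if_neg (by rw [mem_Icc]; omega), if_neg (by omega)]
  · obtain ⟨j, rfl⟩ := Nat.exists_eq_add_of_le' (mem_Icc.mp hℓ).1
    have hj : j < #(Icc 2 R) := by
      rw [Nat.card_Icc]; have := (mem_Icc.mp hℓ).2; omega
    rw [weightEquation_iff hM h1 hqs hW1,
      ← sum_tsum_lagrangeGeomTerm_mul_pow hinj (abs_inv_natCast_lt_one hM) hj]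
    refine sum_congr rfl fun r hr => ?_
    rw [weightSolution, if_pos hr,
      div_mul_cancel₀ _ (weightNode_pos (by omega) h1 (hqs r hr)).ne']

theorem IsWeightSolution.eq_weightSolution (hW : IsWeightSolution R M a q W) :
    W = weightSolution R M a q := by
  funext r
  by_cases hr : r ∈ Icc 2 R
  · rw [weightSolution, if_pos hr, eq_div_iff (weightNode_pos (by omega) h1 (hqs r hr)).ne',
      hW.mul_weightNode_eq_tsum hM h1 hqs hinj hr]
  by_cases hr1 : r = 1
  · subst hr1
    simp [hW.2.1, weightSolution]
  rw [mem_Icc] at hr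
  rw [hW.1 r (by rw [mem_Icc]; omega), weightSolution, if_neg (by rw [mem_Icc]; omega),
    if_neg hr1]

end WeightSystem

theorem stmt_1_general (R M : ℕ) (hR : 2 ≤ R) (hM : 2 ≤ M) (a : ℝ)
    (q : ℕ → ℝ) (hq : ∀ r ∈ Icc 1 R, 0 < q r)
    (hnodes : ∀ r ∈ Icc 2 R, ∀ s ∈ Icc 2 R, r ≠ s →
      (M : ℝ) ^ (-((r : ℝ) - 2)) * (q 1 / q r) ^ a ≠
        (M : ℝ) ^ (-((s : ℝ) - 2)) * (q 1 / q s) ^ a) :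
    (∃! W : ℕ → ℝ, (∀ r, r ∉ Icc 1 R → W r = 0) ∧ W 1 = 1 ∧
      ∀ ℓ ∈ Icc 2 R,
        W 1 * q 1 ^ (-(a * ((ℓ : ℝ) - 1))) +
          ((M : ℝ) ^ ((1 : ℝ) - (ℓ : ℝ)) - 1) *
            ∑ r ∈ Icc 2 R, W r * (M : ℝ) ^ (-(((r : ℝ) - 2) * ((ℓ : ℝ) - 1))) *
              q r ^ (-(a * ((ℓ : ℝ) - 1))) = 0) ∧
    (∀ W : ℕ → ℝ,
      ((∀ r, r ∉ Icc 1 R → W r = 0) ∧ W 1 = 1 ∧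
        ∀ ℓ ∈ Icc 2 R,
          W 1 * q 1 ^ (-(a * ((ℓ : ℝ) - 1))) +
            ((M : ℝ) ^ ((1 : ℝ) - (ℓ : ℝ)) - 1) *
              ∑ r ∈ Icc 2 R, W r * (M : ℝ) ^ (-(((r : ℝ) - 2) * ((ℓ : ℝ) - 1))) *
                q r ^ (-(a * ((ℓ : ℝ) - 1))) = 0) →
      ∀ r ∈ Icc 2 R,
        Summable (fun k : ℕ => (M : ℝ) ^ (-(k : ℝ)) *
          ∏ s ∈ (Icc 2 R).erase r,
            (1 - (M : ℝ) ^ ((s : ℝ) - 2 - (k : ℝ)) * (q s / q 1) ^ a) /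
              (1 - (M : ℝ) ^ ((s : ℝ) - (r : ℝ)) * (q s / q r) ^ a)) ∧
        W r = (M : ℝ) ^ ((r : ℝ) - 2) * (q r / q 1) ^ a *
          ∑' k : ℕ, (M : ℝ) ^ (-(k : ℝ)) *
            ∏ s ∈ (Icc 2 R).erase r,
              (1 - (M : ℝ) ^ ((s : ℝ) - 2 - (k : ℝ)) * (q s / q 1) ^ a) /
                (1 - (M : ℝ) ^ ((s : ℝ) - (r : ℝ)) * (q s / q r) ^ a)) := by
  have h1 : 0 < q 1 := hq 1 (mem_Icc.mpr ⟨le_rfl, by omega⟩)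
  have hqs : ∀ r ∈ Icc 2 R, 0 < q r := fun r hr => hq r (Icc_subset_Icc_left one_le_two hr)
  have hinj : Set.InjOn (weightNode M a q) (Icc 2 R) := fun r hr s hs hrs =>
    not_not.mp fun hne => hnodes r hr s hs hne hrs
  have hM1 : 1 < M := by omega
  refine ⟨⟨weightSolution R M a q, isWeightSolution_weightSolution hM1 h1 hqs hinj (by omega),
    fun W hW => IsWeightSolution.eq_weightSolution hM1 h1 hqs hinj hW⟩, fun W hW r hr => ?_⟩
  rw [rpow_mul_prod_eq_lagrangeGeomTerm (by omega) h1 hqs hr, ← inv_weightNode h1 (hqs r hr),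
    ← IsWeightSolution.mul_weightNode_eq_tsum hM1 h1 hqs hinj hW hr]
  refine ⟨summable_lagrangeGeomTerm (abs_inv_natCast_lt_one hM1) r, ?_⟩
  rw [inv_mul_eq_div, mul_div_cancel_right₀ _ (weightNode_pos (by omega) h1 (hqs r hr)).ne']

/-- Existence and uniqueness of the solution of the ML2Rgodic weight system, together
with the closed form of the weights as absolutely convergent series. -/
theorem stmt_1 (R M : ℕ) (hR : 2 ≤ R) (hM : 2 ≤ M) (a : ℝ) (ha : a ∈ Set.Ioo (0 : ℝ) 1)
    (q : ℕ → ℝ) (hq : ∀ r ∈ Icc 1 R, 0 < q r) (hqsum : ∑ r ∈ Icc 1 R, q r = 1)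
    (hnodes : ∀ r ∈ Icc 2 R, ∀ s ∈ Icc 2 R, r ≠ s →
      (M : ℝ) ^ (-((r : ℝ) - 2)) * (q 1 / q r) ^ a ≠
        (M : ℝ) ^ (-((s : ℝ) - 2)) * (q 1 / q s) ^ a) :
    (∃! W : ℕ → ℝ, (∀ r, r ∉ Icc 1 R → W r = 0) ∧ W 1 = 1 ∧
      ∀ ℓ ∈ Icc 2 R,
        W 1 * q 1 ^ (-(a * ((ℓ : ℝ) - 1))) +
          ((M : ℝ) ^ ((1 : ℝ) - (ℓ : ℝ)) - 1) *
            ∑ r ∈ Icc 2 R, W r * (M : ℝ) ^ (-(((r : ℝ) - 2) * ((ℓ : ℝ) - 1))) *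
              q r ^ (-(a * ((ℓ : ℝ) - 1))) = 0) ∧
    (∀ W : ℕ → ℝ,
      ((∀ r, r ∉ Icc 1 R → W r = 0) ∧ W 1 = 1 ∧
        ∀ ℓ ∈ Icc 2 R,
          W 1 * q 1 ^ (-(a * ((ℓ : ℝ) - 1))) +
            ((M : ℝ) ^ ((1 : ℝ) - (ℓ : ℝ)) - 1) *
              ∑ r ∈ Icc 2 R, W r * (M : ℝ) ^ (-(((r : ℝ) - 2) * ((ℓ : ℝ) - 1))) *
                q r ^ (-(a * ((ℓ : ℝ) - 1))) = 0) →
      ∀ r ∈ Icc 2 R,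
        Summable (fun k : ℕ => (M : ℝ) ^ (-(k : ℝ)) *
          ∏ s ∈ (Icc 2 R).erase r,
            (1 - (M : ℝ) ^ ((s : ℝ) - 2 - (k : ℝ)) * (q s / q 1) ^ a) /
              (1 - (M : ℝ) ^ ((s : ℝ) - (r : ℝ)) * (q s / q r) ^ a)) ∧
        W r = (M : ℝ) ^ ((r : ℝ) - 2) * (q r / q 1) ^ a *
          ∑' k : ℕ, (M : ℝ) ^ (-(k : ℝ)) *
            ∏ s ∈ (Icc 2 R).erase r,
              (1 - (M : ℝ) ^ ((s : ℝ) - 2 - (k : ℝ)) * (q s / q 1) ^ a) /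
                (1 - (M : ℝ) ^ ((s : ℝ) - (r : ℝ)) * (q s / q r) ^ a)) :=
  stmt_1_general R M hR hM a q hq hnodes
end

section
/- Fix an integer R ≥ 2, an integer M ≥ 2, a real a ∈ (0,1), and positive reals q₁,…,q_R with q₁ + ⋯ + q_R = 1 such that the nodes x_r := M^{−(r−2)} (q₁/q_r)^a, r = 2,…,R, are pairwise distinct. Let (W₁,…,W_R) be the unique solution of the weight system. Then the coefficient W̃_{R+2} := W₁ q₁^{−a(R+1)} + (M^{−R−1} − 1) ∑_{r=2}^R W_r M^{−(r−2)(R+1)} q_r^{−a(R+1)} satisfies W̃_{R+2} = (1 − M^{−(R+1)}) q₁^{−a(R+1)} ∑_{k=0}^∞ M^{−k(R+1)} (1 + ∑_{r=0}^{R−2} M^{k−r}(q₁/q_{r+2})^a) ∏_{r=0}^{R−2} (1 − M^{k−r}(q₁/q_{r+2})^a). -/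
/-!
Write `n = R - 1`, `ρ = M⁻¹`, `x_j = ρ^j (q₁/q_{j+2})^a` and `u_j = W_{j+2} x_j` for `j < n`.
Then the weight system says exactly that `∑_j u_j x_j^i = (1 - ρ^(i+1))⁻¹` for `i < n`.

Let `P = X^(n+1) - (X + ∑ x_j) ∏ (X - x_j)`: the two monic polynomials agree in their two
leading coefficients, so `deg P < n`, and `P(x_j) = x_j^(n+1)`. With `z = ρ^k`, the `k`-th summand
of the series is `z^(n+2) - z P(z)`. Summing the geometric series coefficientwise and then using
the moment identities, `∑_k z P(z) = ∑_i P_i (1 - ρ^(i+1))⁻¹ = ∑_j u_j P(x_j) = ∑_j u_j x_j^(n+1)`,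
which is the sum appearing in `W̃_{R+2}`.
-/

open Finset

namespace Polynomial
variable {R ι : Type*} [CommRing R]

theorem natDegree_X_pow_sub_X_sub_C_nextCoeff_mul_lt {Q : R[X]} (hQ : Q.Monic)
    (hpos : 0 < Q.natDegree) :
    (X ^ (Q.natDegree + 1) - (X - C Q.nextCoeff) * Q).natDegree < Q.natDegree := by
  have hnext := nextCoeff_of_natDegree_pos hpos
  have hlead := hQ.coeff_natDegree
  have hzero : ∀ i, Q.natDegree < i → Q.coeff i = 0 := fun i => coeff_eq_zero_of_natDegree_lt
  generalize Q.natDegree = n at *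
  rw [Nat.lt_iff_le_pred hpos, natDegree_le_iff_coeff_eq_zero]
  intro N hN
  obtain ⟨k, rfl⟩ : ∃ k, N = k + 1 := ⟨N - 1, by omega⟩
  rw [coeff_sub, coeff_X_sub_C_mul, coeff_X_pow]
  rcases lt_trichotomy k n with hk | rfl | hk
  · obtain rfl : k = n - 1 := by omega
    simp [Nat.sub_add_cancel hpos, ← hnext, hlead]
  · simp [hlead, hzero]
  · simp [hzero, hk, hk.trans (Nat.lt_succ_self k), hk.ne']

noncomputable def powSuccInterp (t : Finset ι) (x : ι → R) : R[X] :=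
  X ^ (#t + 1) - (X + C (∑ j ∈ t, x j)) * ∏ j ∈ t, (X - C (x j))

theorem natDegree_powSuccInterp_lt [Nontrivial R] {t : Finset ι} (ht : t.Nonempty) (x : ι → R) :
    (powSuccInterp t x).natDegree < #t := by
  have hQ : (∏ j ∈ t, (X - C (x j))).Monic :=
    monic_prod_of_monic _ _ fun j _ => monic_X_sub_C (x j)
  have hdeg := natDegree_finsetProd_X_sub_C_eq_card t x
  have := natDegree_X_pow_sub_X_sub_C_nextCoeff_mul_lt hQ (hdeg ▸ ht.card_pos)
  rwa [prod_X_sub_C_nextCoeff, hdeg, map_neg, sub_neg_eq_add] at this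

theorem eval_powSuccInterp {t : Finset ι} {j : ι} (hj : j ∈ t) (x : ι → R) :
    (powSuccInterp t x).eval (x j) = x j ^ (#t + 1) := by
  simp [powSuccInterp, eval_prod, prod_eq_zero hj]

theorem pow_mul_one_add_sum_mul_prod_one_sub (t : Finset ι) (x : ι → R) {y z : R}
    (hyz : y * z = 1) :
    z ^ (#t + 2) * (1 + ∑ j ∈ t, y * x j) * ∏ j ∈ t, (1 - y * x j) =
      z ^ (#t + 2) - z * (powSuccInterp t x).eval z := by
  have hfac : ∏ j ∈ t, (z - x j) = z ^ #t * ∏ j ∈ t, (1 - y * x j) := by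
    rw [← prod_const, ← prod_mul_distrib]
    refine prod_congr rfl fun j _ => ?_
    linear_combination x j * hyz
  simp only [powSuccInterp, eval_sub, eval_pow, eval_X, eval_mul, eval_add, eval_C, eval_prod,
    hfac, ← mul_sum]
  linear_combination (z ^ (#t + 1) * (∑ j ∈ t, x j) * ∏ j ∈ t, (1 - y * x j)) * hyz

theorem sum_mul_eval_eq_sum_coeff_mul {p : R[X]} {n : ℕ} (hp : p.natDegree < n) (t : Finset ι)
    (u x : ι → R) (c : ℕ → R) (hmom : ∀ i < n, ∑ j ∈ t, u j * x j ^ i = c i) :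
    ∑ j ∈ t, u j * p.eval (x j) = ∑ i ∈ range n, p.coeff i * c i := by
  simp_rw [eval_eq_sum_range' hp, mul_sum]
  rw [sum_comm]
  refine sum_congr rfl fun i hi => ?_
  rw [← hmom i (mem_range.mp hi), mul_sum]
  exact sum_congr rfl fun j _ => by ring

theorem hasSum_pow_mul_eval_pow {p : ℝ[X]} {n : ℕ} (hp : p.natDegree < n) {ρ : ℝ} (h0 : 0 ≤ ρ)
    (h1 : ρ < 1) :
    HasSum (fun k => ρ ^ k * p.eval (ρ ^ k)) (∑ i ∈ range n, p.coeff i * (1 - ρ ^ (i + 1))⁻¹) := by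
  have hgeom (i : ℕ) :
      HasSum (fun k => p.coeff i * (ρ ^ (i + 1)) ^ k) (p.coeff i * (1 - ρ ^ (i + 1))⁻¹) :=
    (hasSum_geometric_of_lt_one (pow_nonneg h0 _) (pow_lt_one₀ h0 h1 i.succ_ne_zero)).mul_left _
  convert hasSum_sum fun i _ => hgeom i using 2 with k
  rw [eval_eq_sum_range' hp, mul_sum]
  exact sum_congr rfl fun i _ => by ring

end Polynomial

open Polynomial in
theorem hasSum_pow_mul_one_add_sum_mul_prod_one_sub {ι : Type*} {t : Finset ι} (ht : t.Nonempty)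
    {ρ : ℝ} (h0 : 0 < ρ) (h1 : ρ < 1) (u x : ι → ℝ)
    (hmom : ∀ i < #t, ∑ j ∈ t, u j * x j ^ i = (1 - ρ ^ (i + 1))⁻¹) :
    HasSum (fun k => (ρ ^ k) ^ (#t + 2) * (1 + ∑ j ∈ t, (ρ ^ k)⁻¹ * x j) *
        ∏ j ∈ t, (1 - (ρ ^ k)⁻¹ * x j))
      ((1 - ρ ^ (#t + 2))⁻¹ - ∑ j ∈ t, u j * x j ^ (#t + 1)) := by
  have hdeg := natDegree_powSuccInterp_lt ht x
  have hgeom :=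
    hasSum_geometric_of_lt_one (pow_nonneg h0.le (#t + 2)) (pow_lt_one₀ h0.le h1 (by omega))
  have hinterp :
      ∑ j ∈ t, u j * (powSuccInterp t x).eval (x j) = ∑ j ∈ t, u j * x j ^ (#t + 1) :=
    sum_congr rfl fun j hj => by rw [eval_powSuccInterp hj]
  have key := hgeom.sub (hasSum_pow_mul_eval_pow hdeg h0.le h1)
  rw [← sum_mul_eval_eq_sum_coeff_mul hdeg t u x _ hmom, hinterp] at key
  refine key.congr_fun fun k => ?_
  rw [pow_mul_one_add_sum_mul_prod_one_sub t x (inv_mul_cancel₀ (pow_ne_zero k h0.ne')),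
    pow_right_comm]

theorem Real.rpow_neg_natCast_mul_natCast {m : ℝ} (hm : 0 ≤ m) (j e : ℕ) :
    m ^ (-((j : ℝ) * e)) = (m⁻¹ ^ j) ^ e := by
  rw [Real.rpow_neg hm, ← Nat.cast_mul, Real.rpow_natCast, pow_mul, inv_pow, inv_pow]

theorem Real.rpow_neg_mul_natCast {y : ℝ} (hy : 0 ≤ y) (a : ℝ) (e : ℕ) :
    y ^ (-(a * e)) = ((y ^ a) ^ e)⁻¹ := by
  rw [Real.rpow_neg hy, Real.rpow_mul_natCast hy]

/-- `node M a q j` is the paper's node `x_{j+2}`, so the nodes are indexed by `range (R - 1)`. -/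
noncomputable def node (M : ℕ) (a : ℝ) (q : ℕ → ℝ) (j : ℕ) : ℝ :=
  (M : ℝ)⁻¹ ^ j * (q 1 / q (j + 2)) ^ a

theorem sum_Icc_two_eq_sum_node_pow (R M : ℕ) (a : ℝ) {q : ℕ → ℝ} (hq1 : 0 < q 1)
    (hq : ∀ r ∈ Icc 2 R, 0 < q r) (W : ℕ → ℝ) (e : ℕ) :
    ∑ r ∈ Icc 2 R, W r * (M : ℝ) ^ (-(((r : ℝ) - 2) * e)) * q r ^ (-(a * e)) =
      q 1 ^ (-(a * e)) * ∑ j ∈ range (R - 1), W (j + 2) * node M a q j ^ e := by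
  rw [← Ico_add_one_right_eq_Icc, sum_Ico_eq_sum_range, show R + 1 - 2 = R - 1 by omega,
    mul_sum]
  refine sum_congr rfl fun j hj => ?_
  have hqj : 0 < q (j + 2) := hq (j + 2) (by simp at hj ⊢; omega)
  rw [show ((2 + j : ℕ) : ℝ) - 2 = j by push_cast; ring, add_comm 2 j,
    Real.rpow_neg_natCast_mul_natCast (Nat.cast_nonneg M), Real.rpow_neg_mul_natCast hqj.le,
    Real.rpow_neg_mul_natCast hq1.le, node, Real.div_rpow hq1.le hqj.le, mul_pow, div_pow]
  field_simp

theorem inv_inv_pow_mul_node {M : ℕ} (hM : 0 < M) (a : ℝ) (q : ℕ → ℝ) (k r : ℕ) :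
    ((M : ℝ)⁻¹ ^ k)⁻¹ * node M a q r = (M : ℝ) ^ ((k : ℝ) - r) * (q 1 / q (r + 2)) ^ a := by
  rw [Real.rpow_sub (by positivity), Real.rpow_natCast, Real.rpow_natCast, node]
  simp only [inv_pow, inv_inv, div_eq_mul_inv]
  ring

theorem sum_weight_mul_node_pow_eq {R M : ℕ} (hM : 1 < M) {a : ℝ} {q : ℕ → ℝ} (hq1 : 0 < q 1)
    (hq : ∀ r ∈ Icc 2 R, 0 < q r) {W : ℕ → ℝ} (hW1 : W 1 = 1) {i : ℕ}
    (hWi : W 1 * q 1 ^ (-(a * (((i + 2 : ℕ) : ℝ) - 1))) +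
      ((M : ℝ) ^ ((1 : ℝ) - ((i + 2 : ℕ) : ℝ)) - 1) *
        ∑ r ∈ Icc 2 R, W r * (M : ℝ) ^ (-(((r : ℝ) - 2) * (((i + 2 : ℕ) : ℝ) - 1))) *
          q r ^ (-(a * (((i + 2 : ℕ) : ℝ) - 1))) = 0) :
    ∑ j ∈ range (R - 1), W (j + 2) * node M a q j * node M a q j ^ i =
      (1 - (M : ℝ)⁻¹ ^ (i + 1))⁻¹ := by
  rw [show ((i + 2 : ℕ) : ℝ) - 1 = ((i + 1 : ℕ) : ℝ) by push_cast; ring,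
    show (1 : ℝ) - ((i + 2 : ℕ) : ℝ) = -((i + 1 : ℕ) : ℝ) by push_cast; ring,
    sum_Icc_two_eq_sum_node_pow R M a hq1 hq, Real.rpow_neg (Nat.cast_nonneg M),
    Real.rpow_natCast, ← inv_pow, hW1] at hWi
  have hT : q 1 ^ (-(a * ((i + 1 : ℕ) : ℝ))) ≠ 0 := by positivity
  have hB : 1 - (M : ℝ)⁻¹ ^ (i + 1) ≠ 0 :=
    (sub_pos.2 (pow_lt_one₀ (by positivity) (inv_lt_one_of_one_lt₀ (by exact_mod_cast hM))
      i.succ_ne_zero)).ne'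
  simp_rw [mul_assoc, ← pow_succ']
  rw [← mul_eq_one_iff_eq_inv₀ hB]
  apply mul_left_cancel₀ hT
  linear_combination -hWi

theorem stmt_3_general (R M : ℕ) (hR : 2 ≤ R) (hM : 2 ≤ M) (a : ℝ)
    (q : ℕ → ℝ) (hq : ∀ r ∈ Icc 1 R, 0 < q r)
    (W : ℕ → ℝ) (hW1 : W 1 = 1)
    (hWsys : ∀ ℓ ∈ Icc 2 R,
      W 1 * q 1 ^ (-(a * ((ℓ : ℝ) - 1))) +
        ((M : ℝ) ^ ((1 : ℝ) - (ℓ : ℝ)) - 1) *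
          ∑ r ∈ Icc 2 R, W r * (M : ℝ) ^ (-(((r : ℝ) - 2) * ((ℓ : ℝ) - 1))) *
            q r ^ (-(a * ((ℓ : ℝ) - 1))) = 0) :
    W 1 * q 1 ^ (-(a * ((R : ℝ) + 1))) +
      ((M : ℝ) ^ (-(R : ℝ) - 1) - 1) *
        ∑ r ∈ Icc 2 R, W r * (M : ℝ) ^ (-(((r : ℝ) - 2) * ((R : ℝ) + 1))) *
          q r ^ (-(a * ((R : ℝ) + 1)))
    = (1 - (M : ℝ) ^ (-((R : ℝ) + 1))) * q 1 ^ (-(a * ((R : ℝ) + 1))) *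
        ∑' k : ℕ, (M : ℝ) ^ (-((k : ℝ) * ((R : ℝ) + 1))) *
          (1 + ∑ r ∈ Finset.range (R - 1),
            (M : ℝ) ^ ((k : ℝ) - (r : ℝ)) * (q 1 / q (r + 2)) ^ a) *
          ∏ r ∈ Finset.range (R - 1),
            (1 - (M : ℝ) ^ ((k : ℝ) - (r : ℝ)) * (q 1 / q (r + 2)) ^ a) := by
  have hM1 : (1 : ℝ) < M := by exact_mod_cast hM
  have hq1 : 0 < q 1 := hq 1 (by simp; omega)
  have hq2 : ∀ r ∈ Icc 2 R, 0 < q r := fun r hr => hq r (by simp at hr ⊢; omega)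
  have hsum := hasSum_pow_mul_one_add_sum_mul_prod_one_sub (nonempty_range_iff.2 (by omega))
    (inv_pos.2 (by positivity)) (inv_lt_one_of_one_lt₀ hM1) _ _ fun i hi =>
      sum_weight_mul_node_pow_eq hM hq1 hq2 hW1 (hWsys (i + 2) (by simp at hi ⊢; omega))
  rw [card_range, show R - 1 + 2 = R + 1 by omega, show R - 1 + 1 = R by omega] at hsum
  rw [show (R : ℝ) + 1 = ((R + 1 : ℕ) : ℝ) by push_cast; ring,
    show -(R : ℝ) - 1 = -((R + 1 : ℕ) : ℝ) by push_cast; ring]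
  simp_rw [Real.rpow_neg_natCast_mul_natCast (Nat.cast_nonneg M),
    ← inv_inv_pow_mul_node (M := M) (by omega), hsum.tsum_eq,
    sum_Icc_two_eq_sum_node_pow R M a hq1 hq2, hW1]
  rw [Real.rpow_neg (Nat.cast_nonneg M), Real.rpow_natCast, ← inv_pow]
  have hB : 1 - (M : ℝ)⁻¹ ^ (R + 1) ≠ 0 :=
    (sub_pos.2 (pow_lt_one₀ (by positivity) (inv_lt_one_of_one_lt₀ hM1) R.succ_ne_zero)).ne'
  simp_rw [mul_assoc (W _), ← pow_succ']
  linear_combination (-q 1 ^ (-(a * ((R + 1 : ℕ) : ℝ)))) * mul_inv_cancel₀ hB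

/-- Closed form of the coefficient `W̃_{R+2}` for any solution of the weight system. -/
theorem stmt_3 (R M : ℕ) (hR : 2 ≤ R) (hM : 2 ≤ M) (a : ℝ) (ha : a ∈ Set.Ioo (0 : ℝ) 1)
    (q : ℕ → ℝ) (hq : ∀ r ∈ Icc 1 R, 0 < q r) (hqsum : ∑ r ∈ Icc 1 R, q r = 1)
    (hnodes : ∀ r ∈ Icc 2 R, ∀ s ∈ Icc 2 R, r ≠ s →
      (M : ℝ) ^ (-((r : ℝ) - 2)) * (q 1 / q r) ^ a ≠
        (M : ℝ) ^ (-((s : ℝ) - 2)) * (q 1 / q s) ^ a)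
    (W : ℕ → ℝ) (hW1 : W 1 = 1)
    (hWsys : ∀ ℓ ∈ Icc 2 R,
      W 1 * q 1 ^ (-(a * ((ℓ : ℝ) - 1))) +
        ((M : ℝ) ^ ((1 : ℝ) - (ℓ : ℝ)) - 1) *
          ∑ r ∈ Icc 2 R, W r * (M : ℝ) ^ (-(((r : ℝ) - 2) * ((ℓ : ℝ) - 1))) *
            q r ^ (-(a * ((ℓ : ℝ) - 1))) = 0) :
    W 1 * q 1 ^ (-(a * ((R : ℝ) + 1))) +
      ((M : ℝ) ^ (-(R : ℝ) - 1) - 1) *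
        ∑ r ∈ Icc 2 R, W r * (M : ℝ) ^ (-(((r : ℝ) - 2) * ((R : ℝ) + 1))) *
          q r ^ (-(a * ((R : ℝ) + 1)))
    = (1 - (M : ℝ) ^ (-((R : ℝ) + 1))) * q 1 ^ (-(a * ((R : ℝ) + 1))) *
        ∑' k : ℕ, (M : ℝ) ^ (-((k : ℝ) * ((R : ℝ) + 1))) *
          (1 + ∑ r ∈ Finset.range (R - 1),
            (M : ℝ) ^ ((k : ℝ) - (r : ℝ)) * (q 1 / q (r + 2)) ^ a) *
          ∏ r ∈ Finset.range (R - 1),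
            (1 - (M : ℝ) ^ ((k : ℝ) - (r : ℝ)) * (q 1 / q (r + 2)) ^ a) :=
  stmt_3_general R M hR hM a q hq W hW1 hWsys
end

section
/- Fix an integer R ≥ 2, an integer M ≥ 2 and a real a ∈ (0,1), and take uniform re-sizers q₁ = ⋯ = q_R = 1/R. Then the weight system has a unique solution (W₁,…,W_R) given by W_r = w_r + w_{r+1} + ⋯ + w_R for r = 1,…,R, where w_s = ∏_{u=1, u≠s}^{R} 1/(1 − M^{u−s}). -/
/-!
Dividing the `ℓ`-th equation by the positive factor `R ^ (a (ℓ - 1))` and writing `q = 1/M`,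
`x = q ^ (ℓ - 1)`, it becomes `W₁ + (x - 1) ∑_{r ≥ 2} W_r x ^ (r - 2) = 0`, and for tail sums
`W_r = w_r + ⋯ + w_R` summation by parts turns the left side into `∑_s w_s x ^ (s - 1)`.

Now `w_s = ∏_{u ≠ s} q^u / (q^u - q^s)` is the value at `0` of the Lagrange basis polynomial at
`q^s` for the nodes `q, q², …, q^R`. Interpolating `X ^ k` for `k < R` gives
`∑_s w_s (q^s) ^ k = 0 ^ k`, and `(q^s) ^ k = q^k (q^k) ^ (s - 1)`: the case `k = 0` is `W₁ = 1` and
the cases `1 ≤ k < R` are the equations. Two solutions agree because their difference gives a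
polynomial of degree `< R - 1` vanishing at the `R - 1` distinct points `q, …, q^(R-1)`.
-/

open Finset Polynomial

namespace Lagrange

variable {F ι : Type*} [Field F] [DecidableEq ι] {s : Finset ι} {v : ι → F}

theorem sum_eval_basis_mul_pow (hvs : Set.InjOn v s) {m : ℕ} (hm : m < #s) (x : F) :
    ∑ i ∈ s, (Lagrange.basis s v i).eval x * v i ^ m = x ^ m := by
  have h := congrArg (eval x) (eq_interpolate (f := X ^ m) hvs (by
    rw [degree_X_pow]; exact_mod_cast hm))
  simp only [eval_pow, eval_X, interpolate_apply, eval_finsetSum, eval_mul, eval_C] at h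
  rw [h]
  exact sum_congr rfl fun i _ => mul_comm _ _

theorem eval_zero_basis (hv : ∀ j ∈ s, v j ≠ 0) (i : ι) :
    (Lagrange.basis s v i).eval 0 = ∏ j ∈ s.erase i, (1 - v i / v j)⁻¹ := by
  rw [Lagrange.basis, eval_prod]
  refine prod_congr rfl fun j hj => ?_
  have hvj := hv j (mem_of_mem_erase hj)
  rw [basisDivisor, eval_mul, eval_C, eval_sub, eval_X, eval_C, one_sub_div hvj, inv_div,
    zero_sub, ← neg_sub, inv_neg, neg_mul_neg, div_eq_inv_mul]

end Lagrange

theorem sum_Icc_two_eq_sum_range {M : Type*} [AddCommMonoid M] (g : ℕ → M) (n : ℕ) :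
    ∑ r ∈ Icc 2 n, g r = ∑ i ∈ range (n - 1), g (i + 2) := by
  rw [← Ico_add_one_right_eq_Icc, sum_Ico_eq_sum_range, Nat.add_sub_add_right n 1 1]
  simp_rw [add_comm 2]

theorem sum_Icc_mul_pow_eq_sum_add_mul_tail (f : ℕ → ℝ) (x : ℝ) (n : ℕ) :
    ∑ s ∈ Icc 1 n, f s * x ^ (s - 1) =
      ∑ s ∈ Icc 1 n, f s + (x - 1) * ∑ r ∈ Icc 2 n, (∑ s ∈ Icc r n, f s) * x ^ (r - 2) := by
  have hswap : ∑ r ∈ Icc 2 n, (∑ s ∈ Icc r n, f s) * x ^ (r - 2) =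
      ∑ s ∈ Icc 2 n, f s * ∑ r ∈ Icc 2 s, x ^ (r - 2) := by
    simp_rw [sum_mul, mul_sum]
    exact sum_comm' fun r s => by simp only [mem_Icc]; omega
  have hdrop : ∑ s ∈ Icc 1 n, f s * (x ^ (s - 1) - 1) = ∑ s ∈ Icc 2 n, f s * (x ^ (s - 1) - 1) :=
    (sum_subset (Icc_subset_Icc_left one_le_two) fun s hs hs' => by
      obtain rfl : s = 1 := by simp only [mem_Icc] at hs hs'; omega
      simp).symm
  rw [hswap, mul_sum, ← sub_eq_iff_eq_add', ← sum_sub_distrib]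
  simp_rw [← mul_sub_one, hdrop, sum_Icc_two_eq_sum_range (fun r => x ^ (r - 2)),
    Nat.add_sub_cancel, mul_left_comm (x - 1), mul_geom_sum]

theorem eq_zero_of_forall_sum_Icc_mul_pow_eq_zero {q : ℝ} (hq₀ : 0 < q) (hq₁ : q ≠ 1)
    {R : ℕ} {E : ℕ → ℝ}
    (h : ∀ k ∈ Icc 1 (R - 1), ∑ r ∈ Icc 2 R, E r * (q ^ k) ^ (r - 2) = 0) :
    ∀ r ∈ Icc 2 R, E r = 0 := by
  have hE := Matrix.eq_zero_of_forall_index_sum_mul_pow_eq_zero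
    (f := fun j : Fin (R - 1) => q ^ ((j : ℕ) + 1)) (v := fun i => E (i + 2))
    (fun i j hij => Fin.ext (Nat.succ_injective (pow_right_injective₀ hq₀ hq₁ hij)))
    fun j => by
      rw [Fin.sum_univ_eq_sum_range (fun i => E (i + 2) * (q ^ ((j : ℕ) + 1)) ^ i),
        ← h (j + 1) (by simp only [mem_Icc]; omega), sum_Icc_two_eq_sum_range]
      simp only [Nat.add_sub_cancel]
  intro r hr
  obtain ⟨hr₂, hrR⟩ := mem_Icc.mp hr
  simpa [Nat.sub_add_cancel hr₂] using congrFun hE ⟨r - 2, by omega⟩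

noncomputable def lagrangeWeight (q : ℝ) (R s : ℕ) : ℝ :=
  (Lagrange.basis (Icc 1 R) (q ^ ·) s).eval 0

section GeometricNodes

variable {q : ℝ} {R : ℕ}

theorem pow_mul_sum_lagrangeWeight_mul_pow (hq₀ : 0 < q) (hq₁ : q ≠ 1) {k : ℕ} (hk : k < R) :
    q ^ k * ∑ s ∈ Icc 1 R, lagrangeWeight q R s * (q ^ k) ^ (s - 1) = 0 ^ k := by
  rw [mul_sum, ← Lagrange.sum_eval_basis_mul_pow (s := Icc 1 R)
    (pow_right_injective₀ hq₀ hq₁).injOn (by simpa using hk) 0]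
  refine sum_congr rfl fun s hs => ?_
  rw [lagrangeWeight, mul_left_comm, ← pow_succ', Nat.sub_add_cancel (mem_Icc.mp hs).1,
    ← pow_mul, ← pow_mul, mul_comm k, mul_comm]

theorem sum_lagrangeWeight (hq₀ : 0 < q) (hq₁ : q ≠ 1) (hR : 1 ≤ R) :
    ∑ s ∈ Icc 1 R, lagrangeWeight q R s = 1 := by
  simpa using pow_mul_sum_lagrangeWeight_mul_pow hq₀ hq₁ hR

theorem sum_lagrangeWeight_mul_pow (hq₀ : 0 < q) (hq₁ : q ≠ 1) {k : ℕ} (hk₀ : k ≠ 0)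
    (hk : k < R) : ∑ s ∈ Icc 1 R, lagrangeWeight q R s * (q ^ k) ^ (s - 1) = 0 := by
  simpa [hk₀, hq₀.ne'] using pow_mul_sum_lagrangeWeight_mul_pow hq₀ hq₁ hk

noncomputable def tailWeight (q : ℝ) (R r : ℕ) : ℝ :=
  if r ∈ Icc 1 R then ∑ s ∈ Icc r R, lagrangeWeight q R s else 0

def ReducedWeightSystem (q : ℝ) (R : ℕ) (W : ℕ → ℝ) : Prop :=
  (∀ r, r ∉ Icc 1 R → W r = 0) ∧ W 1 = 1 ∧
    ∀ k ∈ Icc 1 (R - 1), W 1 + (q ^ k - 1) * ∑ r ∈ Icc 2 R, W r * (q ^ k) ^ (r - 2) = 0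

theorem reducedWeightSystem_tailWeight (hq₀ : 0 < q) (hq₁ : q ≠ 1) (hR : 1 ≤ R) :
    ReducedWeightSystem q R (tailWeight q R) := by
  have htail : ∀ r ∈ Icc 1 R, tailWeight q R r = ∑ s ∈ Icc r R, lagrangeWeight q R s :=
    fun r hr => if_pos hr
  have hone : 1 ∈ Icc 1 R := mem_Icc.mpr ⟨le_rfl, hR⟩
  refine ⟨fun r hr => if_neg hr, by rw [htail 1 hone, sum_lagrangeWeight hq₀ hq₁ hR],
    fun k hk => ?_⟩
  obtain ⟨hk₁, hkR⟩ := mem_Icc.mp hk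
  rw [sum_congr rfl fun r hr => by
      rw [htail r (Icc_subset_Icc_left one_le_two hr)], htail 1 hone,
    ← sum_Icc_mul_pow_eq_sum_add_mul_tail,
    sum_lagrangeWeight_mul_pow hq₀ hq₁ (by omega) (by omega)]

theorem ReducedWeightSystem.unique (hq₀ : 0 < q) (hq₁ : q ≠ 1) {W W' : ℕ → ℝ}
    (hW : ReducedWeightSystem q R W) (hW' : ReducedWeightSystem q R W') : W = W' := by
  obtain ⟨hW₀, hW₁, hWeq⟩ := hW
  obtain ⟨hW'₀, hW'₁, hW'eq⟩ := hW'
  have hdiff : ∀ r ∈ Icc 2 R, W r - W' r = 0 := by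
    refine eq_zero_of_forall_sum_Icc_mul_pow_eq_zero hq₀ hq₁ fun k hk => ?_
    have hqk : q ^ k - 1 ≠ 0 :=
      sub_ne_zero.mpr fun h => by
        have := pow_right_injective₀ hq₀ hq₁ (h.trans (pow_zero q).symm)
        simp only [mem_Icc] at hk; omega
    refine (mul_eq_zero.mp ?_).resolve_left hqk
    simp_rw [sub_mul, sum_sub_distrib]
    linear_combination hWeq k hk - hW'eq k hk - (hW₁ - hW'₁)
  funext r
  by_cases hr : r ∈ Icc 1 R
  · rcases eq_or_ne r 1 with rfl | hr₁
    · rw [hW₁, hW'₁]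
    · exact sub_eq_zero.mp (hdiff r (by simp only [mem_Icc] at hr ⊢; omega))
  · rw [hW₀ r hr, hW'₀ r hr]

theorem reducedWeightSystem_iff (hq₀ : 0 < q) (hq₁ : q ≠ 1) (hR : 1 ≤ R) {W : ℕ → ℝ} :
    ReducedWeightSystem q R W ↔ W = tailWeight q R :=
  ⟨fun hW => hW.unique hq₀ hq₁ (reducedWeightSystem_tailWeight hq₀ hq₁ hR),
    fun hW => hW ▸ reducedWeightSystem_tailWeight hq₀ hq₁ hR⟩

end GeometricNodes

theorem lagrangeWeight_inv_natCast {M : ℕ} (hM : M ≠ 0) (R s : ℕ) :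
    lagrangeWeight (M : ℝ)⁻¹ R s =
      ∏ u ∈ (Icc 1 R).erase s, (1 - (M : ℝ) ^ ((u : ℝ) - (s : ℝ)))⁻¹ := by
  have hM₀ : (0 : ℝ) < M := by positivity
  rw [lagrangeWeight, Lagrange.eval_zero_basis fun j _ => by positivity]
  refine prod_congr rfl fun u _ => ?_
  rw [Real.rpow_sub hM₀, Real.rpow_natCast, Real.rpow_natCast, inv_pow, inv_pow, inv_div_inv]

def UniformWeightSystem (R M : ℕ) (a : ℝ) (W : ℕ → ℝ) : Prop :=
  (∀ r, r ∉ Icc 1 R → W r = 0) ∧ W 1 = 1 ∧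
    ∀ ℓ ∈ Icc 2 R,
      W 1 * ((1 : ℝ) / R) ^ (-(a * ((ℓ : ℝ) - 1))) +
        ((M : ℝ) ^ ((1 : ℝ) - (ℓ : ℝ)) - 1) *
          ∑ r ∈ Icc 2 R, W r * (M : ℝ) ^ (-(((r : ℝ) - 2) * ((ℓ : ℝ) - 1))) *
            ((1 : ℝ) / R) ^ (-(a * ((ℓ : ℝ) - 1))) = 0

theorem uniformWeightEquation_iff {R M ℓ : ℕ} (hR : R ≠ 0) (hℓ : 1 ≤ ℓ) (a : ℝ) (W : ℕ → ℝ) :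
    W 1 * ((1 : ℝ) / R) ^ (-(a * ((ℓ : ℝ) - 1))) +
        ((M : ℝ) ^ ((1 : ℝ) - (ℓ : ℝ)) - 1) *
          ∑ r ∈ Icc 2 R, W r * (M : ℝ) ^ (-(((r : ℝ) - 2) * ((ℓ : ℝ) - 1))) *
            ((1 : ℝ) / R) ^ (-(a * ((ℓ : ℝ) - 1))) = 0 ↔
      W 1 + ((M : ℝ)⁻¹ ^ (ℓ - 1) - 1) *
        ∑ r ∈ Icc 2 R, W r * ((M : ℝ)⁻¹ ^ (ℓ - 1)) ^ (r - 2) = 0 := by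
  have hc : ((1 : ℝ) / R) ^ (-(a * ((ℓ : ℝ) - 1))) ≠ 0 :=
    (Real.rpow_pos_of_pos (by positivity) _).ne'
  have hpow : ∀ (n : ℕ) (y : ℝ), y = -(n : ℝ) → (M : ℝ) ^ y = (M : ℝ)⁻¹ ^ n := by
    rintro n _ rfl
    rw [Real.rpow_neg_natCast, zpow_neg, zpow_natCast, inv_pow]
  have hx : (M : ℝ) ^ ((1 : ℝ) - ℓ) = (M : ℝ)⁻¹ ^ (ℓ - 1) :=
    hpow _ _ (by push_cast [Nat.cast_sub hℓ]; ring)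
  have hxr : ∀ r ∈ Icc 2 R,
      (M : ℝ) ^ (-(((r : ℝ) - 2) * ((ℓ : ℝ) - 1))) = ((M : ℝ)⁻¹ ^ (ℓ - 1)) ^ (r - 2) := by
    intro r hr
    rw [← pow_mul]
    exact hpow _ _ (by push_cast [Nat.cast_sub hℓ, Nat.cast_sub (mem_Icc.mp hr).1]; ring)
  rw [hx, sum_congr rfl fun r hr => by rw [hxr r hr], ← sum_mul, ← mul_assoc, ← add_mul,
    mul_eq_zero, or_iff_left hc]

theorem uniformWeightSystem_iff {R M : ℕ} (hR : R ≠ 0) (a : ℝ) (W : ℕ → ℝ) :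
    UniformWeightSystem R M a W ↔ ReducedWeightSystem (M : ℝ)⁻¹ R W := by
  refine and_congr_right' (and_congr_right' ⟨fun h k hk => ?_, fun h ℓ hℓ => ?_⟩)
  · have hℓ : k + 1 ∈ Icc 2 R := by simp only [mem_Icc] at hk ⊢; omega
    simpa only [Nat.add_sub_cancel] using
      (uniformWeightEquation_iff hR (Nat.le_add_left 1 k) a W).mp (h _ hℓ)
  · have hk : ℓ - 1 ∈ Icc 1 (R - 1) := by simp only [mem_Icc] at hℓ ⊢; omega
    exact (uniformWeightEquation_iff hR (by simp only [mem_Icc] at hℓ; omega) a W).mpr (h _ hk)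

theorem stmt_4_general (R M : ℕ) (hR : 2 ≤ R) (hM : 2 ≤ M) (a : ℝ) :
    (∃! W : ℕ → ℝ, (∀ r, r ∉ Icc 1 R → W r = 0) ∧ W 1 = 1 ∧
      ∀ ℓ ∈ Icc 2 R,
        W 1 * ((1 : ℝ) / R) ^ (-(a * ((ℓ : ℝ) - 1))) +
          ((M : ℝ) ^ ((1 : ℝ) - (ℓ : ℝ)) - 1) *
            ∑ r ∈ Icc 2 R, W r * (M : ℝ) ^ (-(((r : ℝ) - 2) * ((ℓ : ℝ) - 1))) *
              ((1 : ℝ) / R) ^ (-(a * ((ℓ : ℝ) - 1))) = 0) ∧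
    (∀ W : ℕ → ℝ,
      ((∀ r, r ∉ Icc 1 R → W r = 0) ∧ W 1 = 1 ∧
        ∀ ℓ ∈ Icc 2 R,
          W 1 * ((1 : ℝ) / R) ^ (-(a * ((ℓ : ℝ) - 1))) +
            ((M : ℝ) ^ ((1 : ℝ) - (ℓ : ℝ)) - 1) *
              ∑ r ∈ Icc 2 R, W r * (M : ℝ) ^ (-(((r : ℝ) - 2) * ((ℓ : ℝ) - 1))) *
                ((1 : ℝ) / R) ^ (-(a * ((ℓ : ℝ) - 1))) = 0) →
      ∀ r ∈ Icc 1 R,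
        W r = ∑ s ∈ Icc r R,
          ∏ u ∈ (Icc 1 R).erase s, (1 - (M : ℝ) ^ ((u : ℝ) - (s : ℝ)))⁻¹) := by
  have hq₀ : (0 : ℝ) < (M : ℝ)⁻¹ := by positivity
  have hq₁ : (M : ℝ)⁻¹ ≠ 1 := inv_ne_one.mpr (by norm_cast; omega)
  have hsol : ∀ W, UniformWeightSystem R M a W ↔ W = tailWeight (M : ℝ)⁻¹ R := fun W =>
    (uniformWeightSystem_iff (by omega) a W).trans (reducedWeightSystem_iff hq₀ hq₁ (by omega))
  refine ⟨⟨_, (hsol _).mpr rfl, fun W hW => (hsol W).mp hW⟩, fun W hW r hr => ?_⟩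
  rw [(hsol W).mp hW, tailWeight, if_pos hr]
  exact sum_congr rfl fun s _ => lagrangeWeight_inv_natCast (by omega) R s

/-- With uniform re-sizers `q_r = 1/R`, the weight system has a unique solution, given by
`W_r = w_r + ⋯ + w_R` with `w_s = ∏_{u ≠ s} (1 - M^{u-s})⁻¹`. -/
theorem stmt_4 (R M : ℕ) (hR : 2 ≤ R) (hM : 2 ≤ M) (a : ℝ) (ha : a ∈ Set.Ioo (0 : ℝ) 1) :
    (∃! W : ℕ → ℝ, (∀ r, r ∉ Icc 1 R → W r = 0) ∧ W 1 = 1 ∧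
      ∀ ℓ ∈ Icc 2 R,
        W 1 * ((1 : ℝ) / R) ^ (-(a * ((ℓ : ℝ) - 1))) +
          ((M : ℝ) ^ ((1 : ℝ) - (ℓ : ℝ)) - 1) *
            ∑ r ∈ Icc 2 R, W r * (M : ℝ) ^ (-(((r : ℝ) - 2) * ((ℓ : ℝ) - 1))) *
              ((1 : ℝ) / R) ^ (-(a * ((ℓ : ℝ) - 1))) = 0) ∧
    (∀ W : ℕ → ℝ,
      ((∀ r, r ∉ Icc 1 R → W r = 0) ∧ W 1 = 1 ∧
        ∀ ℓ ∈ Icc 2 R,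
          W 1 * ((1 : ℝ) / R) ^ (-(a * ((ℓ : ℝ) - 1))) +
            ((M : ℝ) ^ ((1 : ℝ) - (ℓ : ℝ)) - 1) *
              ∑ r ∈ Icc 2 R, W r * (M : ℝ) ^ (-(((r : ℝ) - 2) * ((ℓ : ℝ) - 1))) *
                ((1 : ℝ) / R) ^ (-(a * ((ℓ : ℝ) - 1))) = 0) →
      ∀ r ∈ Icc 1 R,
        W r = ∑ s ∈ Icc r R,
          ∏ u ∈ (Icc 1 R).erase s, (1 - (M : ℝ) ^ ((u : ℝ) - (s : ℝ)))⁻¹) :=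
  stmt_4_general R M hR hM a
end

section
/- Fix an integer M ≥ 2. For integers R ≥ 1 and 1 ≤ r ≤ R, define the uniform-re-sizer weights W_r^{(R)} = ∑_{s=r}^{R} w_s^{(R)} with w_s^{(R)} = ∏_{u=1, u≠s}^{R} 1/(1 − M^{u−s}). Then these weights are uniformly bounded: sup over all R ≥ 1 and all 1 ≤ r ≤ R of |W_r^{(R)}| is finite. -/
/-!
Write `w_s = ∏_{u ≠ s} (1 - M^{u-s})⁻¹`. The factors with `u < s` are `(1 - t)⁻¹` with
`0 ≤ t ≤ 2^{u-s}` and `(1 - t)⁻¹ ≤ exp (2t)`, so their product is at most `e⁴`.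
The factors with `u > s` have absolute value at most `1`, and the one with `u = R` is at most
`2^{1-(R-s)}`. Hence `|w_s| ≤ 2 e⁴ 2^{-(R-s)}`, and summing this geometric bound over `s ≤ R`
bounds every `|W_r|`.
-/

open Finset Real

noncomputable def smallWeight (q : ℝ) (R s : ℕ) : ℝ :=
  ∏ u ∈ (Icc 1 R).erase s, (1 - q ^ ((u : ℝ) - s))⁻¹

lemma abs_inv_one_sub_le_exp {t : ℝ} (h0 : 0 ≤ t) (ht : t ≤ 1 / 2) :
    |(1 - t)⁻¹| ≤ exp (2 * t) := by
  have hpos : 0 < 1 - t := by linarith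
  calc |(1 - t)⁻¹| = (1 - t)⁻¹ := abs_of_pos (inv_pos.2 hpos)
    _ ≤ 2 * t + 1 := by rw [inv_le_iff_one_le_mul₀ hpos]; nlinarith
    _ ≤ exp (2 * t) := add_one_le_exp _

lemma abs_inv_one_sub_le_two_mul_inv {t : ℝ} (ht : 2 ≤ t) : |(1 - t)⁻¹| ≤ 2 * t⁻¹ := by
  rw [abs_inv, abs_of_neg (by linarith), neg_sub, ← div_eq_mul_inv,
    inv_le_iff_one_le_mul₀ (by linarith), div_mul_eq_mul_div, le_div_iff₀ (by linarith)]
  linarith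

section rpow

variable {q : ℝ} {u s : ℕ}

lemma rpow_natCast_sub_le_half_pow (hq : 2 ≤ q) (h : u ≤ s) :
    q ^ ((u : ℝ) - s) ≤ (1 / 2) ^ (s - u) := by
  have hexp : (u : ℝ) - s = -((s - u : ℕ) : ℝ) := by push_cast [Nat.cast_sub h]; ring
  rw [hexp, rpow_neg (by linarith), rpow_natCast, one_div, inv_pow]
  gcongr

lemma two_pow_le_rpow_natCast_sub (hq : 2 ≤ q) (h : s ≤ u) :
    (2 : ℝ) ^ (u - s) ≤ q ^ ((u : ℝ) - s) := by
  rw [← Nat.cast_sub h, rpow_natCast]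
  gcongr

lemma abs_inv_one_sub_rpow_le_exp (hq : 2 ≤ q) (h : u < s) :
    |(1 - q ^ ((u : ℝ) - s))⁻¹| ≤ exp (2 * (1 / 2) ^ (s - u)) := by
  have hle := rpow_natCast_sub_le_half_pow hq h.le
  have hhalf : ((1 : ℝ) / 2) ^ (s - u) ≤ 1 / 2 :=
    pow_le_of_le_one (by norm_num) (by norm_num) (by omega)
  calc |(1 - q ^ ((u : ℝ) - s))⁻¹| ≤ exp (2 * q ^ ((u : ℝ) - s)) :=
        abs_inv_one_sub_le_exp (rpow_nonneg (by linarith) _) (hle.trans hhalf)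
    _ ≤ exp (2 * (1 / 2) ^ (s - u)) := by gcongr

lemma abs_inv_one_sub_rpow_le (hq : 2 ≤ q) (h : s < u) :
    |(1 - q ^ ((u : ℝ) - s))⁻¹| ≤ 2 * (1 / 2) ^ (u - s) := by
  have hge := two_pow_le_rpow_natCast_sub hq h.le
  have htwo : (2 : ℝ) ≤ 2 ^ (u - s) := le_self_pow₀ (by norm_num) (by omega)
  calc |(1 - q ^ ((u : ℝ) - s))⁻¹| ≤ 2 * (q ^ ((u : ℝ) - s))⁻¹ :=
        abs_inv_one_sub_le_two_mul_inv (htwo.trans hge)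
    _ ≤ 2 * ((2 : ℝ) ^ (u - s))⁻¹ := by gcongr
    _ = 2 * (1 / 2) ^ (u - s) := by rw [one_div, inv_pow]

lemma abs_inv_one_sub_rpow_le_one (hq : 2 ≤ q) (h : s < u) :
    |(1 - q ^ ((u : ℝ) - s))⁻¹| ≤ 1 := by
  have hhalf : ((1 : ℝ) / 2) ^ (u - s) ≤ 1 / 2 :=
    pow_le_of_le_one (by norm_num) (by norm_num) (by omega)
  linarith [abs_inv_one_sub_rpow_le hq h]

end rpow

lemma sum_half_pow_sub_le_two (S : Finset ℕ) {n : ℕ} (h : ∀ u ∈ S, u ≤ n) :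
    ∑ u ∈ S, (1 / 2 : ℝ) ^ (n - u) ≤ 2 :=
  calc ∑ u ∈ S, (1 / 2 : ℝ) ^ (n - u)
        ≤ ∑ u ∈ range (n + 1), (1 / 2 : ℝ) ^ (n + 1 - 1 - u) :=
        sum_le_sum_of_subset_of_nonneg (fun u hu ↦ mem_range.2 (Nat.lt_succ_of_le (h u hu)))
          (fun _ _ _ ↦ by positivity)
    _ = ∑ k ∈ range (n + 1), (1 / 2 : ℝ) ^ k := sum_range_reflect (fun k ↦ (1 / 2) ^ k) _
    _ ≤ 2 := sum_geometric_two_le _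

section smallWeight

variable {q : ℝ} (hq : 2 ≤ q)
include hq

lemma prod_abs_inv_one_sub_rpow_le_exp_four (S : Finset ℕ) {s : ℕ} (h : ∀ u ∈ S, u < s) :
    ∏ u ∈ S, |(1 - q ^ ((u : ℝ) - s))⁻¹| ≤ exp 4 :=
  calc ∏ u ∈ S, |(1 - q ^ ((u : ℝ) - s))⁻¹| ≤ ∏ u ∈ S, exp (2 * (1 / 2) ^ (s - u)) :=
        prod_le_prod (fun _ _ ↦ abs_nonneg _) fun u hu ↦ abs_inv_one_sub_rpow_le_exp hq (h u hu)
    _ = exp (2 * ∑ u ∈ S, (1 / 2) ^ (s - u)) := by rw [← exp_sum, mul_sum]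
    _ ≤ exp 4 := by
        gcongr
        linarith [sum_half_pow_sub_le_two S fun u hu ↦ (h u hu).le]

lemma prod_Ioc_abs_inv_one_sub_rpow_le (R s : ℕ) :
    ∏ u ∈ Ioc s R, |(1 - q ^ ((u : ℝ) - s))⁻¹| ≤ 2 * (1 / 2) ^ (R - s) := by
  rcases le_or_gt R s with hRs | hsR
  · rw [Ioc_eq_empty_of_le hRs, prod_empty, Nat.sub_eq_zero_of_le hRs]
    norm_num
  have hR : R ∈ Ioc s R := right_mem_Ioc.2 hsR
  have hrest : ∏ u ∈ (Ioc s R).erase R, |(1 - q ^ ((u : ℝ) - s))⁻¹| ≤ 1 :=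
    prod_le_one (fun _ _ ↦ abs_nonneg _) fun u hu ↦
      abs_inv_one_sub_rpow_le_one hq (mem_Ioc.1 (mem_of_mem_erase hu)).1
  rw [← mul_prod_erase _ _ hR]
  calc _ ≤ 2 * (1 / 2) ^ (R - s) * 1 :=
        mul_le_mul (abs_inv_one_sub_rpow_le hq hsR) hrest (prod_nonneg fun _ _ ↦ abs_nonneg _)
          (by positivity)
    _ = 2 * (1 / 2) ^ (R - s) := mul_one _

lemma abs_smallWeight_le (R s : ℕ) : |smallWeight q R s| ≤ 2 * exp 4 * (1 / 2) ^ (R - s) := by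
  have hupper : {u ∈ (Icc 1 R).erase s | ¬u < s} = Ioc s R := by
    ext u; simp only [mem_filter, mem_erase, mem_Icc, mem_Ioc]; omega
  rw [smallWeight, abs_prod, ← prod_filter_mul_prod_filter_not _ (· < s), hupper]
  calc _ ≤ exp 4 * (2 * (1 / 2) ^ (R - s)) :=
        mul_le_mul
          (prod_abs_inv_one_sub_rpow_le_exp_four hq _ fun u hu ↦ (mem_filter.1 hu).2)
          (prod_Ioc_abs_inv_one_sub_rpow_le hq R s) (prod_nonneg fun _ _ ↦ abs_nonneg _)
          (exp_pos 4).le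
    _ = 2 * exp 4 * (1 / 2) ^ (R - s) := by ring

end smallWeight

/-- The uniform-re-sizer weights `W_r^{(R)} = ∑_{s=r}^R ∏_{u ≠ s} (1 - M^{u-s})⁻¹`
are uniformly bounded over all `R ≥ 1` and `1 ≤ r ≤ R`. -/
theorem stmt_5 (M : ℕ) (hM : 2 ≤ M) :
    ∃ C : ℝ, ∀ R : ℕ, 1 ≤ R → ∀ r ∈ Icc 1 R,
      |∑ s ∈ Icc r R,
          ∏ u ∈ (Icc 1 R).erase s, (1 - (M : ℝ) ^ ((u : ℝ) - (s : ℝ)))⁻¹| ≤ C := by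
  have hq : (2 : ℝ) ≤ M := by exact_mod_cast hM
  refine ⟨2 * exp 4 * 2, fun R _ r _ ↦ ?_⟩
  calc |∑ s ∈ Icc r R, smallWeight M R s| ≤ ∑ s ∈ Icc r R, |smallWeight M R s| :=
        abs_sum_le_sum_abs _ _
    _ ≤ ∑ s ∈ Icc r R, 2 * exp 4 * (1 / 2) ^ (R - s) :=
        sum_le_sum fun s _ ↦ abs_smallWeight_le hq R s
    _ = 2 * exp 4 * ∑ s ∈ Icc r R, (1 / 2) ^ (R - s) := (mul_sum _ _ _).symm
    _ ≤ 2 * exp 4 * 2 := by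
        gcongr
        exact sum_half_pow_sub_le_two _ fun s hs ↦ (mem_Icc.1 hs).2
end

section
/- Fix an integer R ≥ 2, an integer M ≥ 2 and a real a ∈ (0,1), and take uniform re-sizers q₁ = ⋯ = q_R = 1/R. Let (W₁,…,W_R) be the unique solution of the weight system (so W_r = w_r + ⋯ + w_R with w_s = ∏_{u≠s}(1 − M^{u−s})^{-1}). Then W̃_{R+1} := W₁ R^{aR} + (M^{−R} − 1) ∑_{r=2}^R W_r M^{−(r−2)R} R^{aR} equals (−1)^{R−1} R^{aR} M^{−R(R−1)/2}, and W̃_{R+2} := W₁ R^{a(R+1)} + (M^{−R−1} − 1) ∑_{r=2}^R W_r M^{−(r−2)(R+1)} R^{a(R+1)} equals (−1)^{R+1} R^{a(R+1)} M^{−R(R−1)/2} (1 − M^{−R})/(1 − M^{−1}). -/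
/-!
The polynomial `P(x) = W₁ + (x - 1) ∑_{r=2}^R W_r x^(r-2)` has degree at most `R - 1`. After
dividing out the positive factor `R^(a(ℓ-1))`, the `ℓ`-th equation of the weight system reads
`P(M^(1-ℓ)) = 0`, and `W₁ = 1` reads `P(1) = 1`. So `P` is determined by its values at the `R`
distinct nodes `1, M⁻¹, …, M^(1-R)`:
`P(x) = ∏_{j=1}^{R-1} (x - M^(-j)) / (1 - M^(-j))`.
The two coefficients are `R^(aR) P(M^(-R))` and `R^(a(R+1)) P(M^(-R-1))`. Writing
`M^(-R) - M^(-j) = -M^(-j) (1 - M^(j-R))` and reflecting `j ↦ R - j` cancels the denominators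
(up to the telescoping factor `(1 - M^(-R)) / (1 - M^(-1))` in the second case).
-/

open Finset Polynomial

theorem Polynomial.eval_eq_mul_prod_of_natDegree_le {K : Type*} [Field K] {p : K[X]} {n : ℕ}
    {v : ℕ → K} (hp : p.natDegree ≤ n) (hv : Set.InjOn v (range (n + 1)))
    (hroot : ∀ j < n, p.eval (v (j + 1)) = 0) (x : K) :
    p.eval x = p.eval (v 0) * ∏ j ∈ range n, (x - v (j + 1)) / (v 0 - v (j + 1)) := by
  have hne : ∀ j < n, v 0 - v (j + 1) ≠ 0 := fun j hj h =>
    absurd (hv (by simp) (by simp; omega) (sub_eq_zero.1 h)) (by omega)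
  have hden : ∏ j ∈ range n, (v 0 - v (j + 1)) ≠ 0 :=
    prod_ne_zero_iff.2 fun j hj => hne j (mem_range.1 hj)
  set Q : K[X] := C (p.eval (v 0) / ∏ j ∈ range n, (v 0 - v (j + 1))) *
    ∏ j ∈ range n, (X - C (v (j + 1))) with hQ
  have hQeval : ∀ y, Q.eval y =
      p.eval (v 0) / (∏ j ∈ range n, (v 0 - v (j + 1))) *
        ∏ j ∈ range n, (y - v (j + 1)) := by
    intro y
    simp only [hQ, eval_mul, eval_C, eval_prod, eval_sub, eval_X]
  suffices p = Q by
    rw [congrArg (eval x) this, hQeval, prod_div_distrib]; ring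
  refine eq_of_degree_sub_lt_of_eval_index_eq (range (n + 1)) hv ?_ ?_
  · have hQdeg : Q.natDegree ≤ n :=
      (natDegree_C_mul_le _ _).trans (by simp)
    refine (degree_le_of_natDegree_le (natDegree_sub_le_of_le hp hQdeg)).trans_lt ?_
    rw [card_range]; exact_mod_cast (by omega : max n n < n + 1)
  · intro i hi
    rw [hQeval]
    rcases i with _ | j
    · exact (div_mul_cancel₀ _ hden).symm
    · have hj : j < n := by simp at hi; omega
      rw [hroot j hj, prod_eq_zero (f := fun k => v (j + 1) - v (k + 1)) (mem_range.2 hj)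
        (sub_self _), mul_zero]

noncomputable def weightPoly {K : Type*} [CommRing K] (W : ℕ → K) (R : ℕ) : K[X] :=
  C (W 1) + (X - 1) * ∑ r ∈ Icc 2 R, C (W r) * X ^ (r - 2)

section weightPoly

variable {K : Type*} [CommRing K] (W : ℕ → K) (R : ℕ)

theorem eval_weightPoly (x : K) :
    (weightPoly W R).eval x = W 1 + (x - 1) * ∑ r ∈ Icc 2 R, W r * x ^ (r - 2) := by
  simp [weightPoly, eval_finsetSum]

theorem natDegree_weightPoly_le (hR : 2 ≤ R) : (weightPoly W R).natDegree ≤ R - 1 := by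
  have hsum : (∑ r ∈ Icc 2 R, C (W r) * X ^ (r - 2)).natDegree ≤ R - 2 :=
    natDegree_sum_le_of_forall_le _ _ fun r hr =>
      (natDegree_C_mul_X_pow_le _ _).trans (by simp only [mem_Icc] at hr; omega)
  refine natDegree_add_le_of_degree_le ((natDegree_C _).trans_le (Nat.zero_le _)) ?_
  have hlin : (X - 1 : K[X]).natDegree ≤ 1 := by compute_degree
  exact (natDegree_mul_le_of_le hlin hsum).trans (by omega)

end weightPoly

theorem eval_weightPoly_eq_prod {K : Type*} [Field K] {W : ℕ → K} {q : K} {n : ℕ}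
    (hq : Set.InjOn (q ^ ·) (range (n + 1))) (hW1 : W 1 = 1)
    (hroot : ∀ j < n, (weightPoly W (n + 1)).eval (q ^ (j + 1)) = 0) (hn : 2 ≤ n + 1) (x : K) :
    (weightPoly W (n + 1)).eval x = ∏ j ∈ range n, (x - q ^ (j + 1)) / (1 - q ^ (j + 1)) := by
  have hP1 : (weightPoly W (n + 1)).eval 1 = 1 := by simp [eval_weightPoly, hW1]
  simpa [hP1] using
    eval_eq_mul_prod_of_natDegree_le (natDegree_weightPoly_le W _ hn) hq hroot x

theorem prod_pow_sub_pow {K : Type*} [CommRing K] (q : K) (n k : ℕ) :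
    ∏ j ∈ range n, (q ^ (n + k + 1) - q ^ (j + 1))
      = (-1) ^ n * q ^ (∑ j ∈ range (n + 1), j) * ∏ j ∈ range n, (1 - q ^ (k + j + 1)) := by
  have hfactor : ∀ j ∈ range n,
      q ^ (n + k + 1) - q ^ (j + 1) = (-1) * q ^ (j + 1) * (1 - q ^ (k + (n - 1 - j) + 1)) := by
    intro j hj
    obtain ⟨d, rfl⟩ : ∃ d, n = j + 1 + d := ⟨n - (j + 1), by simp at hj; omega⟩
    rw [show k + (j + 1 + d - 1 - j) + 1 = k + d + 1 by omega]
    ring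
  rw [prod_congr rfl hfactor, prod_mul_distrib, prod_mul_distrib, prod_const, card_range,
    prod_pow_eq_pow_sum, prod_range_reflect (fun j => 1 - q ^ (k + j + 1)),
    sum_range_succ' (fun j => j), add_zero]

section geometricNodes

variable {K : Type*} [Field K] {q : K} {n : ℕ}

theorem prod_pow_succ_sub_pow_div (hq : ∀ j < n, 1 - q ^ (j + 1) ≠ 0) :
    ∏ j ∈ range n, (q ^ (n + 1) - q ^ (j + 1)) / (1 - q ^ (j + 1))
      = (-1) ^ n * q ^ (∑ j ∈ range (n + 1), j) := by
  have hden : ∏ j ∈ range n, (1 - q ^ (j + 1)) ≠ 0 :=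
    prod_ne_zero_iff.2 fun j hj => hq j (mem_range.1 hj)
  rw [prod_div_distrib, prod_pow_sub_pow q n 0]
  simp only [zero_add]
  rw [mul_div_assoc, div_self hden, mul_one]

theorem prod_pow_succ_succ_sub_pow_div (hq : ∀ j ≤ n, 1 - q ^ (j + 1) ≠ 0) :
    ∏ j ∈ range n, (q ^ (n + 2) - q ^ (j + 1)) / (1 - q ^ (j + 1))
      = (-1) ^ n * q ^ (∑ j ∈ range (n + 1), j) * ((1 - q ^ (n + 1)) / (1 - q)) := by
  have hden : ∏ j ∈ range n, (1 - q ^ (j + 1)) ≠ 0 :=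
    prod_ne_zero_iff.2 fun j hj => hq j (by simp at hj; omega)
  have hq0 : 1 - q ≠ 0 := by simpa using hq 0 (Nat.zero_le n)
  have htelescope : (∏ j ∈ range n, (1 - q ^ (1 + j + 1))) * (1 - q)
      = (1 - q ^ (n + 1)) * ∏ j ∈ range n, (1 - q ^ (j + 1)) := by
    have h := (prod_range_succ' (fun j => 1 - q ^ (j + 1)) n).symm.trans
      (prod_range_succ (fun j => 1 - q ^ (j + 1)) n)
    simpa only [add_comm 1, zero_add, pow_one, mul_comm (1 - q ^ (n + 1))] using h
  rw [prod_div_distrib, prod_pow_sub_pow q n 1, mul_div_assoc]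
  exact congrArg _ ((div_eq_div_iff hden hq0).2 htelescope)

end geometricNodes

theorem Real.rpow_eq_inv_pow_of_eq_neg {x e : ℝ} (hx : 0 ≤ x) {m : ℕ} (he : e = -m) :
    x ^ e = x⁻¹ ^ m := by
  rw [he, Real.rpow_neg hx, Real.rpow_natCast, inv_pow]

theorem Nat.cast_sum_range_id {K : Type*} [Field K] [CharZero K] (R : ℕ) :
    ((∑ j ∈ range R, j : ℕ) : K) = (R : K) * ((R : K) - 1) / 2 := by
  induction R with
  | zero => simp
  | succ n ih => rw [sum_range_succ, Nat.cast_add, ih]; push_cast; ring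

theorem Real.rpow_neg_mul_sub_one_div_two {x : ℝ} (hx : 0 ≤ x) (R : ℕ) :
    x ^ (-((R : ℝ) * ((R : ℝ) - 1) / 2)) = x⁻¹ ^ (∑ j ∈ range R, j) :=
  Real.rpow_eq_inv_pow_of_eq_neg hx (by rw [Nat.cast_sum_range_id])

theorem weightSystem_row_eq_eval {M : ℝ} (hM : 0 ≤ M) (W : ℕ → ℝ) (R k : ℕ) {e t : ℝ}
    (c : ℝ) (he : e = -k) (ht : t = k) :
    W 1 * c + (M ^ e - 1) * ∑ r ∈ Icc 2 R, W r * M ^ (-(((r : ℝ) - 2) * t)) * c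
      = (weightPoly W R).eval (M⁻¹ ^ k) * c := by
  have hterm : ∀ r ∈ Icc 2 R, W r * M ^ (-(((r : ℝ) - 2) * t)) * c
      = W r * (M⁻¹ ^ k) ^ (r - 2) * c := by
    intro r hr
    rw [← pow_mul, Real.rpow_eq_inv_pow_of_eq_neg hM (m := k * (r - 2))]
    simp only [mem_Icc] at hr
    push_cast [ht, hr.1]
    ring
  rw [sum_congr rfl hterm, Real.rpow_eq_inv_pow_of_eq_neg hM he, eval_weightPoly, ← sum_mul]
  ring

theorem stmt_6_general (R M : ℕ) (hR : 2 ≤ R) (hM : 2 ≤ M) (a : ℝ)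
    (W : ℕ → ℝ) (hW1 : W 1 = 1)
    (hWsys : ∀ ℓ ∈ Icc 2 R,
      W 1 * ((1 : ℝ) / R) ^ (-(a * ((ℓ : ℝ) - 1))) +
        ((M : ℝ) ^ ((1 : ℝ) - (ℓ : ℝ)) - 1) *
          ∑ r ∈ Icc 2 R, W r * (M : ℝ) ^ (-(((r : ℝ) - 2) * ((ℓ : ℝ) - 1))) *
            ((1 : ℝ) / R) ^ (-(a * ((ℓ : ℝ) - 1))) = 0) :
    W 1 * (R : ℝ) ^ (a * (R : ℝ)) +
      ((M : ℝ) ^ (-(R : ℝ)) - 1) *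
        ∑ r ∈ Icc 2 R, W r * (M : ℝ) ^ (-(((r : ℝ) - 2) * (R : ℝ))) * (R : ℝ) ^ (a * (R : ℝ))
      = (-1 : ℝ) ^ (R - 1) * (R : ℝ) ^ (a * (R : ℝ)) *
          (M : ℝ) ^ (-((R : ℝ) * ((R : ℝ) - 1) / 2)) ∧
    W 1 * (R : ℝ) ^ (a * ((R : ℝ) + 1)) +
      ((M : ℝ) ^ (-(R : ℝ) - 1) - 1) *
        ∑ r ∈ Icc 2 R, W r * (M : ℝ) ^ (-(((r : ℝ) - 2) * ((R : ℝ) + 1))) *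
          (R : ℝ) ^ (a * ((R : ℝ) + 1))
      = (-1 : ℝ) ^ (R + 1) * (R : ℝ) ^ (a * ((R : ℝ) + 1)) *
          (M : ℝ) ^ (-((R : ℝ) * ((R : ℝ) - 1) / 2)) *
          ((1 - (M : ℝ) ^ (-(R : ℝ))) / (1 - (M : ℝ) ^ (-(1 : ℝ)))) := by
  obtain ⟨n, rfl⟩ : ∃ n, R = n + 1 := ⟨R - 1, by omega⟩
  have hM0 : (0 : ℝ) ≤ M := M.cast_nonneg
  set q : ℝ := (M : ℝ)⁻¹ with hq
  have hq0 : 0 < q := by positivity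
  have hq1 : q < 1 := inv_lt_one_of_one_lt₀ (by exact_mod_cast hM)
  have hnodes : ∀ j, 1 - q ^ (j + 1) ≠ 0 := fun j =>
    (sub_pos.2 (pow_lt_one₀ hq0.le hq1 (Nat.succ_ne_zero j))).ne'
  have hroot : ∀ j < n, (weightPoly W (n + 1)).eval (q ^ (j + 1)) = 0 := by
    intro j hj
    have h := hWsys (j + 2) (by simp only [mem_Icc]; omega)
    rw [weightSystem_row_eq_eval hM0 W _ (j + 1) _ (by push_cast; ring) (by push_cast; ring)] at h
    exact (mul_eq_zero.1 h).resolve_right (by positivity)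
  have hP := eval_weightPoly_eq_prod (pow_right_injective₀ hq0 hq1.ne).injOn hW1 hroot hR
  constructor
  · rw [weightSystem_row_eq_eval hM0 W _ (n + 1) _ (by push_cast; ring) rfl, ← hq, hP,
      prod_pow_succ_sub_pow_div fun j _ => hnodes j, Real.rpow_neg_mul_sub_one_div_two hM0]
    simp only [add_tsub_cancel_right]
    ring
  · rw [weightSystem_row_eq_eval hM0 W _ (n + 2) _ (by push_cast; ring) (by push_cast; ring),
      ← hq, hP, prod_pow_succ_succ_sub_pow_div fun j _ => hnodes j,
      Real.rpow_neg_mul_sub_one_div_two hM0,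
      Real.rpow_eq_inv_pow_of_eq_neg hM0 (m := n + 1) (by push_cast; ring),
      Real.rpow_eq_inv_pow_of_eq_neg hM0 (m := 1) (by push_cast; ring)]
    ring

/-- For the (unique) solution of the weight system with uniform re-sizers `q_r = 1/R`,
closed forms of the coefficients `W̃_{R+1}` and `W̃_{R+2}`. -/
theorem stmt_6 (R M : ℕ) (hR : 2 ≤ R) (hM : 2 ≤ M) (a : ℝ) (ha : a ∈ Set.Ioo (0 : ℝ) 1)
    (W : ℕ → ℝ) (hW1 : W 1 = 1)
    (hWsys : ∀ ℓ ∈ Icc 2 R,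
      W 1 * ((1 : ℝ) / R) ^ (-(a * ((ℓ : ℝ) - 1))) +
        ((M : ℝ) ^ ((1 : ℝ) - (ℓ : ℝ)) - 1) *
          ∑ r ∈ Icc 2 R, W r * (M : ℝ) ^ (-(((r : ℝ) - 2) * ((ℓ : ℝ) - 1))) *
            ((1 : ℝ) / R) ^ (-(a * ((ℓ : ℝ) - 1))) = 0)
    (hWform : ∀ r ∈ Icc 1 R,
      W r = ∑ s ∈ Icc r R,
        ∏ u ∈ (Icc 1 R).erase s, (1 - (M : ℝ) ^ ((u : ℝ) - (s : ℝ)))⁻¹) :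
    W 1 * (R : ℝ) ^ (a * (R : ℝ)) +
      ((M : ℝ) ^ (-(R : ℝ)) - 1) *
        ∑ r ∈ Icc 2 R, W r * (M : ℝ) ^ (-(((r : ℝ) - 2) * (R : ℝ))) * (R : ℝ) ^ (a * (R : ℝ))
      = (-1 : ℝ) ^ (R - 1) * (R : ℝ) ^ (a * (R : ℝ)) *
          (M : ℝ) ^ (-((R : ℝ) * ((R : ℝ) - 1) / 2)) ∧
    W 1 * (R : ℝ) ^ (a * ((R : ℝ) + 1)) +
      ((M : ℝ) ^ (-(R : ℝ) - 1) - 1) *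
        ∑ r ∈ Icc 2 R, W r * (M : ℝ) ^ (-(((r : ℝ) - 2) * ((R : ℝ) + 1))) *
          (R : ℝ) ^ (a * ((R : ℝ) + 1))
      = (-1 : ℝ) ^ (R + 1) * (R : ℝ) ^ (a * ((R : ℝ) + 1)) *
          (M : ℝ) ^ (-((R : ℝ) * ((R : ℝ) - 1) / 2)) *
          ((1 - (M : ℝ) ^ (-(R : ℝ))) / (1 - (M : ℝ) ^ (-(1 : ℝ)))) :=
  stmt_6_general R M hR hM a W hW1 hWsys
end

section
/- Let R ≥ 1 be an integer, let x₁,…,x_R be pairwise distinct real numbers, let c be a real number, and let (y₁,…,y_R) be the unique solution of the Vandermonde system ∑_{r=1}^{R} x_r^{ℓ−1} y_r = c^{ℓ−1}, ℓ = 1,…,R. Then ∑_{r=1}^{R} y_r x_r^{R} = c^{R} − ∏_{r=1}^{R} (c − x_r). -/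
/-!
Put `p = ∏ r, (X - x r)` and `q = X ^ R - p`. Since `p` is monic of degree `R`, `q` has degree
`< R`, so the moment equations give `∑ r, y r * q(x r) = q(c)` by linearity. As `p(x r) = 0`,
the left side is `∑ r, y r * x r ^ R`, while `q(c) = c ^ R - ∏ r, (c - x r)`.
-/

open Finset Polynomial

theorem sum_mul_eval_eq_eval_of_sum_pow_mul_eq {K ι : Type*} [CommRing K] [Fintype ι]
    {n : ℕ} {x y : ι → K} {c : K} (hy : ∀ ℓ < n, ∑ r, x r ^ ℓ * y r = c ^ ℓ)
    {q : K[X]} (hq : q.natDegree < n) :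
    ∑ r, y r * q.eval (x r) = q.eval c := by
  calc ∑ r, y r * q.eval (x r)
      = ∑ r, ∑ ℓ ∈ range n, q.coeff ℓ * (x r ^ ℓ * y r) := by
        refine sum_congr rfl fun r _ => ?_
        rw [eval_eq_sum_range' hq, mul_sum]
        exact sum_congr rfl fun ℓ _ => by ring
    _ = ∑ ℓ ∈ range n, q.coeff ℓ * c ^ ℓ := by
        rw [sum_comm]
        refine sum_congr rfl fun ℓ hℓ => ?_
        rw [← mul_sum, hy ℓ (mem_range.mp hℓ)]
    _ = q.eval c := (eval_eq_sum_range' hq c).symm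

theorem isMonicOfDegree_prod_X_sub_C {K ι : Type*} [CommRing K] [Nontrivial K] [Fintype ι]
    (x : ι → K) : IsMonicOfDegree (∏ r, (X - C (x r))) (Fintype.card ι) :=
  (isMonicOfDegree_iff' _ _).mpr ⟨natDegree_finsetProd_X_sub_C_eq_card _ _, monic_prod_X_sub_C _ _⟩

theorem eval_prod_X_sub_C_self {K ι : Type*} [CommRing K] [Fintype ι] (x : ι → K) (r : ι) :
    (∏ s, (X - C (x s))).eval (x r) = 0 := by
  rw [eval_prod]
  exact prod_eq_zero (mem_univ r) (by simp)

theorem stmt_9_general (R : ℕ) (hR : 1 ≤ R) (x : Fin R → ℝ) (c : ℝ)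
    (y : Fin R → ℝ) (hy : ∀ ℓ : Fin R, ∑ r, x r ^ (ℓ : ℕ) * y r = c ^ (ℓ : ℕ)) :
    ∑ r, y r * x r ^ R = c ^ R - ∏ r, (c - x r) := by
  set q : ℝ[X] := X ^ R - ∏ r, (X - C (x r))
  have hq : q.natDegree < R := by
    have hp := isMonicOfDegree_prod_X_sub_C x
    rw [Fintype.card_fin] at hp
    exact (isMonicOfDegree_X_pow ℝ R).natDegree_sub_lt (by omega) hp
  have hq_eval : ∀ r, q.eval (x r) = x r ^ R := fun r => by
    simp [q, eval_prod_X_sub_C_self]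
  calc ∑ r, y r * x r ^ R = ∑ r, y r * q.eval (x r) := by simp_rw [hq_eval]
    _ = q.eval c := sum_mul_eval_eq_eval_of_sum_pow_mul_eq (fun ℓ hℓ => hy ⟨ℓ, hℓ⟩) hq
    _ = c ^ R - ∏ r, (c - x r) := by simp [q, eval_prod]

/-- For the solution of the Vandermonde system with right-hand side `(1, c, …, c^{R-1})`,
one has `∑_r y_r x_r^R = c^R - ∏_r (c - x_r)`. -/
theorem stmt_9 (R : ℕ) (hR : 1 ≤ R) (x : Fin R → ℝ) (hx : Function.Injective x) (c : ℝ)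
    (y : Fin R → ℝ) (hy : ∀ ℓ : Fin R, ∑ r, x r ^ (ℓ : ℕ) * y r = c ^ (ℓ : ℕ)) :
    ∑ r, y r * x r ^ R = c ^ R - ∏ r, (c - x r) :=
  stmt_9_general R hR x c y hy
end

section
/- Let R ≥ 1 be an integer, let x₁,…,x_R be pairwise distinct real numbers, let c be a real number, and let (y₁,…,y_R) be the unique solution of the Vandermonde system ∑_{r=1}^{R} x_r^{ℓ−1} y_r = c^{ℓ−1}, ℓ = 1,…,R. Then ∑_{r=1}^{R} y_r x_r^{R+1} = c^{R+1} − (c + ∑_{r=1}^{R} x_r) · ∏_{r=1}^{R} (c − x_r). -/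
/-!
Let `P = ∏ r, (X - x r)`. Since `P` is monic of degree `R` with next coefficient `-∑ r, x r`,
the polynomial `D = X ^ (R + 1) - (X + ∑ r, x r) * P` has degree `< R`. The Vandermonde
equations say exactly that `p ↦ ∑ r, y r * p (x r)` agrees with evaluation at `c` on polynomials
of degree `< R`; applied to `D`, whose values at the nodes `x r` are `x r ^ (R + 1)`, this is
the claimed identity.
-/

open Finset Polynomial

namespace Polynomial

theorem degree_sub_lt_of_coeff_eq {K : Type*} [Ring K] {p q : K[X]} {n : ℕ}
    (hp : p.natDegree ≤ n + 1) (hq : q.natDegree ≤ n + 1)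
    (htop : p.coeff (n + 1) = q.coeff (n + 1)) (hnext : p.coeff n = q.coeff n) :
    (p - q).degree < n := by
  rw [degree_lt_iff_coeff_zero]
  intro m hm
  rw [coeff_sub, sub_eq_zero]
  obtain rfl | rfl | hlt : m = n ∨ m = n + 1 ∨ n + 1 < m := by
    have : n ≤ m := by exact_mod_cast hm
    omega
  · exact hnext
  · exact htop
  · rw [coeff_eq_zero_of_natDegree_lt (hp.trans_lt hlt),
      coeff_eq_zero_of_natDegree_lt (hq.trans_lt hlt)]

/-- The quotient of `X ^ (n + 1)` by a monic `p` of degree `n` is `X - nextCoeff p`. -/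
theorem Monic.degree_X_pow_succ_sub_mul_lt {K : Type*} [Ring K] {p : K[X]} (hp : p.Monic) :
    (X ^ (p.natDegree + 1) - (X - C p.nextCoeff) * p).degree < (p.natDegree : WithBot ℕ) := by
  nontriviality K
  have hq : ((X - C p.nextCoeff) * p).Monic := (monic_X_sub_C _).mul hp
  have hdeg : ((X - C p.nextCoeff) * p).natDegree = p.natDegree + 1 := by
    rw [(monic_X_sub_C _).natDegree_mul hp, natDegree_X_sub_C, add_comm]
  have hnext : ((X - C p.nextCoeff) * p).coeff p.natDegree = 0 := by
    have := (monic_X_sub_C p.nextCoeff).nextCoeff_mul hp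
    rwa [nextCoeff_of_natDegree_pos (by omega), hdeg, Nat.add_sub_cancel, nextCoeff_X_sub_C,
      neg_add_cancel] at this
  apply degree_sub_lt_of_coeff_eq (natDegree_X_pow_le _) hdeg.le
  · rw [coeff_X_pow_self, ← hdeg, hq.coeff_natDegree]
  · rw [coeff_X_pow, if_neg (by omega), hnext]

end Polynomial

theorem sum_mul_eval_eq_eval_of_degree_lt {ι K : Type*} [Fintype ι] [CommSemiring K] {n : ℕ}
    {x y : ι → K} {c : K} (hy : ∀ ℓ < n, ∑ r, x r ^ ℓ * y r = c ^ ℓ) {p : K[X]}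
    (hp : p.degree < n) : ∑ r, y r * p.eval (x r) = p.eval c := by
  rcases eq_or_ne p 0 with rfl | hp0
  · simp
  have hn := (natDegree_lt_iff_degree_lt hp0).2 hp
  simp_rw [eval_eq_sum_range' hn, mul_sum]
  rw [sum_comm]
  refine sum_congr rfl fun ℓ hℓ => ?_
  rw [← hy ℓ (mem_range.1 hℓ), mul_sum]
  exact sum_congr rfl fun r _ => by ring

theorem stmt_10_general (R : ℕ) (x : Fin R → ℝ) (c : ℝ)
    (y : Fin R → ℝ) (hy : ∀ ℓ : Fin R, ∑ r, x r ^ (ℓ : ℕ) * y r = c ^ (ℓ : ℕ)) :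
    ∑ r, y r * x r ^ (R + 1) = c ^ (R + 1) - (c + ∑ r, x r) * ∏ r, (c - x r) := by
  set P : ℝ[X] := ∏ r, (X - C (x r))
  have hP : P.Monic := monic_prod_of_monic _ _ fun r _ => monic_X_sub_C (x r)
  have hPdeg : P.natDegree = R := by
    simp [P, natDegree_prod_of_monic _ _ fun r _ => monic_X_sub_C (x r)]
  have hD := hP.degree_X_pow_succ_sub_mul_lt
  rw [hPdeg, prod_X_sub_C_nextCoeff, map_neg, sub_neg_eq_add] at hD
  have hPx : ∀ r, P.eval (x r) = 0 := fun r => by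
    simp [P, eval_prod, prod_eq_zero (mem_univ r)]
  have hDsum := sum_mul_eval_eq_eval_of_degree_lt (fun ℓ hℓ => hy ⟨ℓ, hℓ⟩) hD
  simpa [hPx, P, eval_prod, eval_finsetSum] using hDsum

/-- For the solution of the Vandermonde system with right-hand side `(1, c, …, c^{R-1})`,
one has `∑_r y_r x_r^{R+1} = c^{R+1} - (c + ∑_r x_r) ∏_r (c - x_r)`. -/
theorem stmt_10 (R : ℕ) (hR : 1 ≤ R) (x : Fin R → ℝ) (hx : Function.Injective x) (c : ℝ)
    (y : Fin R → ℝ) (hy : ∀ ℓ : Fin R, ∑ r, x r ^ (ℓ : ℕ) * y r = c ^ (ℓ : ℕ)) :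
    ∑ r, y r * x r ^ (R + 1) = c ^ (R + 1) - (c + ∑ r, x r) * ∏ r, (c - x r) :=
  stmt_10_general R x c y hy
end

section
/- Let (Ω, F, P) be a probability space, let (Y_k)_{k≥0} be real random variables with ‖Y_k‖_{L²} ≤ C for all k ≥ 0, and let (θ_k)_{k≥1} be a nonincreasing sequence of positive real numbers. Then for every n ≥ 1, ‖∑_{k=1}^{n} θ_k (Y_k − Y_{k−1})‖_{L²} ≤ 2 C θ₁. -/
/-!
Writing `S n = ∑_{k=1}^n θ_k (y_k - y_{k-1})`, one has
`S (n+1) - θ_{n+1} y_{n+1} = (S n - θ_n y_n) + (θ_n - θ_{n+1}) y_n`, and the coefficients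
`θ_n - θ_{n+1}` are nonnegative and telescope, so `‖S n - θ_n y_n‖ ≤ (2 θ_1 - θ_n) C`.
This holds in any normed space; the theorem is the case of `L²(P)`.
-/

open MeasureTheory Finset

section AbelBound

variable {E : Type*} [SeminormedAddCommGroup E] [NormedSpace ℝ E] {y : ℕ → E} {C : ℝ}
  {θ : ℕ → ℝ}

theorem norm_sum_Icc_smul_sub_sub_smul_le (hy : ∀ k, ‖y k‖ ≤ C) (hθ₁ : 0 ≤ θ 1)
    (hθmono : ∀ k, 1 ≤ k → θ (k + 1) ≤ θ k) {n : ℕ} (hn : 1 ≤ n) :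
    ‖∑ k ∈ Icc 1 n, θ k • (y k - y (k - 1)) - θ n • y n‖ ≤ (2 * θ 1 - θ n) * C := by
  induction n, hn using Nat.le_induction with
  | base =>
    rw [Icc_self, sum_singleton, smul_sub, sub_sub_cancel_left, norm_neg, norm_smul,
      Real.norm_of_nonneg hθ₁]
    linarith [mul_le_mul_of_nonneg_left (hy 0) hθ₁]
  | succ n hn ih =>
    have hstep : ∑ k ∈ Icc 1 (n + 1), θ k • (y k - y (k - 1)) - θ (n + 1) • y (n + 1) =
        (∑ k ∈ Icc 1 n, θ k • (y k - y (k - 1)) - θ n • y n) + (θ n - θ (n + 1)) • y n := by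
      rw [sum_Icc_succ_top (by omega), Nat.add_sub_cancel, smul_sub, sub_smul]
      abel
    have hdiff : 0 ≤ θ n - θ (n + 1) := sub_nonneg.2 (hθmono n hn)
    calc _ ≤ (2 * θ 1 - θ n) * C + (θ n - θ (n + 1)) * C := by
          rw [hstep]
          refine (norm_add_le _ _).trans (add_le_add ih ?_)
          rw [norm_smul, Real.norm_of_nonneg hdiff]
          exact mul_le_mul_of_nonneg_left (hy n) hdiff
      _ = (2 * θ 1 - θ (n + 1)) * C := by ring

theorem norm_sum_Icc_smul_sub_le (hy : ∀ k, ‖y k‖ ≤ C) (hθpos : ∀ k, 1 ≤ k → 0 ≤ θ k)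
    (hθmono : ∀ k, 1 ≤ k → θ (k + 1) ≤ θ k) (n : ℕ) :
    ‖∑ k ∈ Icc 1 n, θ k • (y k - y (k - 1))‖ ≤ 2 * C * θ 1 := by
  have hθ₁ := hθpos 1 le_rfl
  have hC : 0 ≤ C := (norm_nonneg _).trans (hy 0)
  rcases Nat.eq_zero_or_pos n with rfl | hn
  · simpa using mul_nonneg (mul_nonneg zero_le_two hC) hθ₁
  calc _ ≤ ‖∑ k ∈ Icc 1 n, θ k • (y k - y (k - 1)) - θ n • y n‖ + ‖θ n • y n‖ :=
        norm_le_norm_sub_add _ _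
    _ ≤ (2 * θ 1 - θ n) * C + θ n * C := by
        refine add_le_add (norm_sum_Icc_smul_sub_sub_smul_le hy hθ₁ hθmono hn) ?_
        rw [norm_smul, Real.norm_of_nonneg (hθpos n hn)]
        exact mul_le_mul_of_nonneg_left (hy n) (hθpos n hn)
    _ = 2 * C * θ 1 := by ring

end AbelBound

theorem eLpNorm_sum_Icc_smul_sub_le {α E : Type*} [MeasurableSpace α] {μ : Measure α}
    [NormedAddCommGroup E] [NormedSpace ℝ E] {p : ENNReal} [Fact (1 ≤ p)] {Y : ℕ → α → E}
    (hY : ∀ k, AEStronglyMeasurable (Y k) μ) {C : ℝ}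
    (hYbound : ∀ k, eLpNorm (Y k) p μ ≤ ENNReal.ofReal C) {θ : ℕ → ℝ}
    (hθpos : ∀ k, 1 ≤ k → 0 ≤ θ k) (hθmono : ∀ k, 1 ≤ k → θ (k + 1) ≤ θ k) (n : ℕ) :
    eLpNorm (fun ω => ∑ k ∈ Icc 1 n, θ k • (Y k ω - Y (k - 1) ω)) p μ ≤
      ENNReal.ofReal (2 * C * θ 1) := by
  -- For `C < 0`, `ENNReal.ofReal C = 0`, so the hypothesis holds with `C = 0` as well.
  wlog hC : 0 ≤ C generalizing C
  · refine (this (C := 0) (fun k => ?_) le_rfl).trans (by simp)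
    simpa [ENNReal.ofReal_of_nonpos (le_of_not_ge hC)] using hYbound k
  have hmem : ∀ k, MemLp (Y k) p μ := fun k => ⟨hY k, (hYbound k).trans_lt ENNReal.ofReal_lt_top⟩
  set F : Lp E p μ := ∑ k ∈ Icc 1 n, θ k • ((hmem k).toLp - (hmem (k - 1)).toLp)
  have hF : ⇑F =ᵐ[μ] fun ω => ∑ k ∈ Icc 1 n, θ k • (Y k ω - Y (k - 1) ω) := by
    have hterm : ∀ᵐ ω ∂μ, ∀ k, (θ k • ((hmem k).toLp - (hmem (k - 1)).toLp) : Lp E p μ) ω =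
        θ k • (Y k ω - Y (k - 1) ω) := by
      refine ae_all_iff.2 fun k => ?_
      filter_upwards [Lp.coeFn_smul (θ k) ((hmem k).toLp - (hmem (k - 1)).toLp),
        Lp.coeFn_sub (hmem k).toLp (hmem (k - 1)).toLp, (hmem k).coeFn_toLp,
        (hmem (k - 1)).coeFn_toLp] with ω h₁ h₂ h₃ h₄
      simp only [h₁, Pi.smul_apply, h₂, Pi.sub_apply, h₃, h₄]
    filter_upwards [Lp.coeFn_fun_finsetSum (Icc 1 n)
      fun k => θ k • ((hmem k).toLp - (hmem (k - 1)).toLp), hterm] with ω hsum hω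
    simp only [F, hsum, hω]
  have hnorm : ∀ k, ‖(hmem k).toLp‖ ≤ C := fun k => by
    rw [Lp.norm_toLp]
    exact ENNReal.toReal_le_of_le_ofReal hC (hYbound k)
  rw [← eLpNorm_congr_ae hF, ← Lp.enorm_def, ← ofReal_norm]
  exact ENNReal.ofReal_le_ofReal (norm_sum_Icc_smul_sub_le hnorm hθpos hθmono n)

theorem stmt_11_general {Ω : Type*} [MeasurableSpace Ω] (P : Measure Ω)
    (Y : ℕ → Ω → ℝ) (hYmeas : ∀ k, Measurable (Y k)) (C : ℝ)
    (hYbound : ∀ k, eLpNorm (Y k) 2 P ≤ ENNReal.ofReal C)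
    (θ : ℕ → ℝ) (hθpos : ∀ k, 1 ≤ k → 0 < θ k)
    (hθmono : ∀ k, 1 ≤ k → θ (k + 1) ≤ θ k)
    (n : ℕ) :
    eLpNorm (fun ω => ∑ k ∈ Finset.Icc 1 n, θ k * (Y k ω - Y (k - 1) ω)) 2 P ≤
      ENNReal.ofReal (2 * C * θ 1) :=
  eLpNorm_sum_Icc_smul_sub_le (fun k => (hYmeas k).aestronglyMeasurable) hYbound
    (fun k hk => (hθpos k hk).le) hθmono n

/-- Abel-type bound: if `‖Y_k‖_{L²} ≤ C` and `(θ_k)_{k ≥ 1}` is a nonincreasing sequence of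
positive reals, then `‖∑_{k=1}^n θ_k (Y_k - Y_{k-1})‖_{L²} ≤ 2 C θ₁`. -/
theorem stmt_11 {Ω : Type*} [MeasurableSpace Ω] (P : Measure Ω) [IsProbabilityMeasure P]
    (Y : ℕ → Ω → ℝ) (hYmeas : ∀ k, Measurable (Y k)) (C : ℝ)
    (hYbound : ∀ k, eLpNorm (Y k) 2 P ≤ ENNReal.ofReal C)
    (θ : ℕ → ℝ) (hθpos : ∀ k, 1 ≤ k → 0 < θ k)
    (hθmono : ∀ k, 1 ≤ k → θ (k + 1) ≤ θ k)
    (n : ℕ) (hn : 1 ≤ n) :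
    eLpNorm (fun ω => ∑ k ∈ Finset.Icc 1 n, θ k * (Y k ω - Y (k - 1) ω)) 2 P ≤
      ENNReal.ofReal (2 * C * θ 1) :=
  stmt_11_general P Y hYmeas C hYbound θ hθpos hθmono n
end

section
/- Let γ₁ > 0 and a ∈ (0,1), set γ_k = γ₁ k^{−a}, Γ_n^{(ℓ)} = ∑_{k=1}^{n} γ_k^{ℓ} and Γ_n = Γ_n^{(1)}. Let χ ∈ (0,1) and let ℓ ≥ 1 be an integer with aℓ < 1. Then for every integer n ≥ ⌈6^{1/(1−a)}/χ⌉, | Γ^{(ℓ)}_{⌊χn⌋}/Γ_{⌊χn⌋} − χ^{−a(ℓ−1)} Γ^{(ℓ)}_{n}/Γ_{n} | ≤ 6 · ((2 − aℓ)/(1 − aℓ)) · γ₁^{ℓ−1} · χ^{−1−a(ℓ−1)} · n^{−(1−a)}. -/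
open Finset

/-!
Writing `H_p(N) = ∑_{k=1}^N k^{-p}`, one has `Γ^{(ℓ)}_N / Γ_N = γ₁^{ℓ-1} H_{aℓ}(N) / H_a(N)`.
The tangent-line inequality for the concave map `x ↦ x^{1-p}` squeezes `(1 - p) H_p(N)` between
`N^{1-p} - 1` and `N^{1-p}`, so `H_{aℓ}(N) / H_a(N)` equals `c N^{a-aℓ}`, with
`c = (1 - a)/(1 - aℓ)`, up to `2 c N^{a-1}` once `N^{1-a} ≥ 2`. At `N = ⌊χn⌋` and `N = n` the
main terms `c ⌊χn⌋^{a-aℓ}` and `χ^{a-aℓ} c n^{a-aℓ} = c (χn)^{a-aℓ}` differ only through the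
rounding, and `χn ≥ 6^{1/(1-a)}` gives `⌊χn⌋ ≥ 5χn/6`, which bounds the three errors by
`(12/5 + 2 + 6/5) c (χn)^{a-1}`.
-/

theorem rpow_add_le_rpow_add_mul_rpow_sub_one {x h p : ℝ} (hx : 0 < x) (hh : -x ≤ h)
    (hp0 : 0 ≤ p) (hp1 : p ≤ 1) : (x + h) ^ p ≤ x ^ p + p * h * x ^ (p - 1) := by
  have hs : -1 ≤ h / x := by rw [le_div_iff₀ hx]; linarith
  calc (x + h) ^ p = x ^ p * (1 + h / x) ^ p := by
        rw [← Real.mul_rpow hx.le (by linarith), mul_add, mul_one, mul_div_cancel₀ _ hx.ne']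
    _ ≤ x ^ p * (1 + p * (h / x)) := by
        gcongr
        exact rpow_one_add_le_one_add_mul_self hs hp0 hp1
    _ = x ^ p + p * h * x ^ (p - 1) := by rw [Real.rpow_sub_one hx.ne']; field_simp

noncomputable def genHarmonic (p : ℝ) (N : ℕ) : ℝ := ∑ k ∈ Icc 1 N, (k : ℝ) ^ (-p)

@[simp]
theorem genHarmonic_zero (p : ℝ) : genHarmonic p 0 = 0 := rfl

theorem genHarmonic_succ (p : ℝ) (N : ℕ) :
    genHarmonic p (N + 1) = genHarmonic p N + ((N : ℝ) + 1) ^ (-p) := by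
  rw [genHarmonic, sum_Icc_succ_top (by omega), Nat.cast_succ]; rfl

theorem sum_mul_rpow_neg_pow_eq (γ₁ a : ℝ) (L N : ℕ) :
    ∑ k ∈ Icc 1 N, (γ₁ * (k : ℝ) ^ (-a)) ^ L = γ₁ ^ L * genHarmonic (a * L) N := by
  rw [genHarmonic, mul_sum]
  refine sum_congr rfl fun k _ => ?_
  rw [mul_pow, ← Real.rpow_natCast ((k : ℝ) ^ (-a)), ← Real.rpow_mul (Nat.cast_nonneg k), neg_mul]

theorem one_sub_mul_genHarmonic_le {p : ℝ} (hp0 : 0 ≤ p) (hp1 : p ≤ 1) (N : ℕ) :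
    (1 - p) * genHarmonic p N ≤ (N : ℝ) ^ (1 - p) := by
  induction N with
  | zero => simpa using Real.rpow_nonneg le_rfl (1 - p)
  | succ N ih =>
    have tangent := rpow_add_le_rpow_add_mul_rpow_sub_one (x := (N : ℝ) + 1) (h := -1)
      (p := 1 - p) (by positivity) (by linarith [(N.cast_nonneg : (0 : ℝ) ≤ N)]) (by linarith)
      (by linarith)
    rw [genHarmonic_succ, Nat.cast_succ]
    simp only [add_neg_cancel_right, sub_sub_cancel_left] at tangent
    linarith

theorem rpow_one_sub_sub_one_le_one_sub_mul_genHarmonic {p : ℝ} (hp0 : 0 ≤ p) (hp1 : p ≤ 1)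
    (N : ℕ) : (N : ℝ) ^ (1 - p) - 1 ≤ (1 - p) * genHarmonic p N := by
  have shifted : ∀ N : ℕ, ((N : ℝ) + 1) ^ (1 - p) - 1 ≤ (1 - p) * genHarmonic p N := by
    intro N
    induction N with
    | zero => simp
    | succ N ih =>
      have tangent := rpow_add_le_rpow_add_mul_rpow_sub_one (x := (N : ℝ) + 1) (h := 1)
        (p := 1 - p) (by positivity) (by linarith [(N.cast_nonneg : (0 : ℝ) ≤ N)]) (by linarith)
        (by linarith)
      rw [genHarmonic_succ, Nat.cast_succ]
      simp only [sub_sub_cancel_left] at tangent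
      linarith
  refine le_trans ?_ (shifted N)
  gcongr
  linarith

theorem abs_div_sub_div_le_two_div {A B P Q : ℝ} (hPA : P - 1 ≤ A) (hAP : A ≤ P)
    (hQB : Q - 1 ≤ B) (hBQ : B ≤ Q) (hQ : 1 ≤ Q) (hQP : Q ≤ P) (hP : 2 ≤ P) :
    |B / A - Q / P| ≤ 2 / P := by
  have hA : 0 < A := by linarith
  rw [abs_sub_le_iff]
  constructor
  · have hB_div : B / A ≤ Q / (P - 1) := div_le_div₀ (by linarith) hBQ (by linarith) hPA
    have hQ_div : Q / (P - 1) ≤ (Q + 2) / P := by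
      rw [div_le_div_iff₀ (by linarith) (by linarith)]
      nlinarith
    rw [add_div] at hQ_div
    linarith
  · have hB_div : (Q - 1) / P ≤ B / A := div_le_div₀ (by linarith) hQB hA hAP
    rw [sub_div] at hB_div
    have : 1 / P ≤ 2 / P := by gcongr; norm_num
    linarith

theorem abs_genHarmonic_div_sub_le {a b : ℝ} (ha : 0 ≤ a) (hab : a ≤ b) (hb : b < 1) {N : ℕ}
    (hN : 2 ≤ (N : ℝ) ^ (1 - a)) :
    |genHarmonic b N / genHarmonic a N - (1 - a) / (1 - b) * (N : ℝ) ^ (a - b)| ≤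
      2 * ((1 - a) / (1 - b)) * (N : ℝ) ^ (a - 1) := by
  have hN1 : (1 : ℝ) ≤ N := by
    refine Nat.one_le_cast.mpr (Nat.one_le_iff_ne_zero.mpr fun h => ?_)
    rw [h, Nat.cast_zero, Real.zero_rpow (by linarith)] at hN
    norm_num at hN
  have h1a : 0 < 1 - a := by linarith
  have h1b : 0 < 1 - b := by linarith
  have sandwich := abs_div_sub_div_le_two_div
    (rpow_one_sub_sub_one_le_one_sub_mul_genHarmonic ha (by linarith) N)
    (one_sub_mul_genHarmonic_le ha (by linarith) N)
    (rpow_one_sub_sub_one_le_one_sub_mul_genHarmonic (by linarith) hb.le N)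
    (one_sub_mul_genHarmonic_le (by linarith) hb.le N)
    (Real.one_le_rpow hN1 h1b.le) (Real.rpow_le_rpow_of_exponent_le hN1 (by linarith)) hN
  have ratio : genHarmonic b N / genHarmonic a N =
      (1 - a) / (1 - b) * ((1 - b) * genHarmonic b N / ((1 - a) * genHarmonic a N)) := by
    rw [mul_div_mul_comm, ← mul_assoc, div_mul_div_cancel₀ h1b.ne', div_self h1a.ne', one_mul]
  have power : (N : ℝ) ^ (a - b) = (N : ℝ) ^ (1 - b) / (N : ℝ) ^ (1 - a) := by
    rw [← Real.rpow_sub (by linarith)]; ring_nf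
  have inverse : (N : ℝ) ^ (a - 1) = 1 / (N : ℝ) ^ (1 - a) := by
    rw [one_div, ← Real.rpow_neg (by linarith), neg_sub]
  rw [ratio, power, ← mul_sub, abs_mul, abs_of_pos (div_pos h1a h1b), inverse, mul_comm 2,
    mul_assoc, mul_one_div]
  gcongr

theorem rpow_le_inv_mul_rpow_of_mul_le {θ y z e : ℝ} (hθ0 : 0 < θ) (hθ1 : θ ≤ 1) (hz : 0 < z)
    (hy : θ * z ≤ y) (he1 : -1 ≤ e) (he0 : e ≤ 0) : y ^ e ≤ θ⁻¹ * z ^ e := by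
  calc y ^ e ≤ (θ * z) ^ e := Real.rpow_le_rpow_of_nonpos (by positivity) hy he0
    _ = θ ^ e * z ^ e := Real.mul_rpow hθ0.le hz.le
    _ ≤ θ ^ (-1 : ℝ) * z ^ e :=
        mul_le_mul_of_nonneg_right (Real.rpow_le_rpow_of_exponent_ge hθ0 hθ1 he1)
          (Real.rpow_nonneg hz.le e)
    _ = θ⁻¹ * z ^ e := by rw [Real.rpow_neg_one]

theorem rpow_sub_rpow_le_div_mul_rpow {x y e : ℝ} (hy : 0 < y) (hyx : y ≤ x) (he1 : -1 ≤ e) :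
    y ^ e - x ^ e ≤ (x - y) / x * y ^ e := by
  have hx : 0 < x := hy.trans_le hyx
  have ratio : y / x ≤ (x / y) ^ e := by
    calc y / x = (x / y) ^ (-1 : ℝ) := by rw [Real.rpow_neg_one, inv_div]
      _ ≤ (x / y) ^ e := Real.rpow_le_rpow_of_exponent_le ((one_le_div hy).mpr hyx) he1
  calc y ^ e - x ^ e = y ^ e * (1 - (x / y) ^ e) := by
        rw [Real.div_rpow hx.le hy.le, mul_sub, mul_div_cancel₀ _ (by positivity), mul_one]
    _ ≤ y ^ e * (1 - y / x) := by gcongr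
    _ = (x - y) / x * y ^ e := by field_simp

theorem rpow_floor_le_mul_rpow {x e : ℝ} (hx : 6 ≤ x) (he1 : -1 ≤ e) (he0 : e ≤ 0) :
    (⌊x⌋₊ : ℝ) ^ e ≤ 6 / 5 * x ^ e := by
  have := rpow_le_inv_mul_rpow_of_mul_le (θ := 5 / 6) (y := ⌊x⌋₊) (z := x) (by norm_num)
    (by norm_num) (by linarith) (by linarith [Nat.sub_one_lt_floor x]) he1 he0
  rwa [show (5 / 6 : ℝ)⁻¹ = 6 / 5 by norm_num] at this

theorem rpow_floor_sub_rpow_le {x e : ℝ} (hx : 6 ≤ x) (he1 : -1 ≤ e) (he0 : e ≤ 0) :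
    (⌊x⌋₊ : ℝ) ^ e - x ^ e ≤ 6 / 5 * x ^ (e - 1) := by
  have hx0 : 0 < x := by linarith
  calc (⌊x⌋₊ : ℝ) ^ e - x ^ e ≤ (x - ⌊x⌋₊) / x * (⌊x⌋₊ : ℝ) ^ e :=
        rpow_sub_rpow_le_div_mul_rpow (Nat.cast_pos.mpr (Nat.floor_pos.mpr (by linarith)))
          (Nat.floor_le hx0.le) he1
    _ ≤ 1 / x * (6 / 5 * x ^ e) := by
        gcongr
        · linarith [Nat.sub_one_lt_floor x]
        · exact rpow_floor_le_mul_rpow hx he1 he0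
    _ = 6 / 5 * x ^ (e - 1) := by rw [Real.rpow_sub_one hx0.ne']; ring

theorem two_le_floor_rpow {x s : ℝ} (hs0 : 0 < s) (hs1 : s ≤ 1) (hx6 : 6 ≤ x) (hxs : 6 ≤ x ^ s) :
    2 ≤ (⌊x⌋₊ : ℝ) ^ s := by
  have hx0 : 0 < x := by linarith
  have hm0 : (0 : ℝ) < ⌊x⌋₊ := Nat.cast_pos.mpr (Nat.floor_pos.mpr (by linarith))
  have hx_inv : x ^ (-s) ≤ 6⁻¹ := by
    rw [Real.rpow_neg hx0.le]
    exact inv_anti₀ (by norm_num) hxs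
  have hm_inv : (⌊x⌋₊ : ℝ) ^ (-s) ≤ 5⁻¹ := by
    linarith [rpow_floor_le_mul_rpow hx6 (e := -s) (by linarith) (by linarith)]
  rw [Real.rpow_neg hm0.le] at hm_inv
  calc (2 : ℝ) ≤ (5⁻¹)⁻¹ := by norm_num
    _ ≤ (⌊x⌋₊ : ℝ) ^ s := by
        rw [← inv_inv ((⌊x⌋₊ : ℝ) ^ s)]
        exact inv_anti₀ (by positivity) hm_inv

theorem abs_sub_mul_le_of_abs_sub_mul_le {X Y c u v r E₁ E₂ : ℝ} (hr : 0 ≤ r)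
    (hX : |X - c * u| ≤ E₁) (hY : |Y - c * v| ≤ E₂) :
    |X - r * Y| ≤ E₁ + r * E₂ + |c| * |u - r * v| := by
  have split : X - r * Y = (X - c * u) + -r * (Y - c * v) + c * (u - r * v) := by ring
  rw [split]
  refine (abs_add_three _ _ _).trans ?_
  rw [abs_mul, abs_neg, abs_of_nonneg hr, abs_mul]
  gcongr

theorem abs_genHarmonic_div_floor_sub_le {a b χ : ℝ} (ha : 0 ≤ a) (hab : a ≤ b) (hb : b < 1)
    (hχ0 : 0 < χ) (hχ1 : χ ≤ 1) {n : ℕ} (hn : (6 : ℝ) ^ (1 / (1 - a)) ≤ χ * n) :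
    |genHarmonic b ⌊χ * n⌋₊ / genHarmonic a ⌊χ * n⌋₊ -
        χ ^ (a - b) * (genHarmonic b n / genHarmonic a n)| ≤
      6 * ((1 - a) / (1 - b)) * (χ * n) ^ (a - 1) := by
  have h1a : 0 < 1 - a := by linarith
  set x := χ * (n : ℝ) with hx_def
  set c := (1 - a) / (1 - b)
  have hc : 0 ≤ c := div_nonneg h1a.le (by linarith)
  have hx6 : 6 ≤ x :=
    (Real.self_le_rpow_of_one_le (by norm_num) (by rw [le_div_iff₀ h1a]; linarith)).trans hn
  have hx_pow : 6 ≤ x ^ (1 - a) :=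
    (Real.rpow_inv_le_iff_of_pos (by norm_num) (by linarith) h1a).mp (by rwa [← one_div])
  have hn_pow : 2 ≤ (n : ℝ) ^ (1 - a) := by
    have hxn : x ≤ n := by rw [hx_def]; nlinarith
    calc (2 : ℝ) ≤ x ^ (1 - a) := by linarith
      _ ≤ (n : ℝ) ^ (1 - a) := by gcongr
  have triangle := abs_sub_mul_le_of_abs_sub_mul_le (Real.rpow_nonneg hχ0.le (a - b))
    (abs_genHarmonic_div_sub_le ha hab hb (two_le_floor_rpow h1a (by linarith) hx6 hx_pow))
    (abs_genHarmonic_div_sub_le ha hab hb hn_pow)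
  have gap_nonneg : 0 ≤ (⌊x⌋₊ : ℝ) ^ (a - b) - x ^ (a - b) :=
    sub_nonneg.mpr (Real.rpow_le_rpow_of_nonpos (Nat.cast_pos.mpr (Nat.floor_pos.mpr
      (by linarith))) (Nat.floor_le (by linarith)) (by linarith))
  rw [abs_of_nonneg hc, ← Real.mul_rpow hχ0.le (Nat.cast_nonneg n), abs_of_nonneg gap_nonneg]
    at triangle
  have term_m : (⌊x⌋₊ : ℝ) ^ (a - 1) ≤ 6 / 5 * x ^ (a - 1) :=
    rpow_floor_le_mul_rpow hx6 (by linarith) (by linarith)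
  have term_n : χ ^ (a - b) * (n : ℝ) ^ (a - 1) ≤ x ^ (a - 1) := by
    rw [hx_def, Real.mul_rpow hχ0.le (Nat.cast_nonneg n)]
    exact mul_le_mul_of_nonneg_right (Real.rpow_le_rpow_of_exponent_ge hχ0 hχ1 (by linarith))
      (Real.rpow_nonneg (Nat.cast_nonneg n) _)
  have term_gap : (⌊x⌋₊ : ℝ) ^ (a - b) - x ^ (a - b) ≤ 6 / 5 * x ^ (a - 1) :=
    (rpow_floor_sub_rpow_le hx6 (by linarith) (by linarith)).trans (by gcongr <;> linarith)
  calc _ ≤ 2 * c * (⌊x⌋₊ : ℝ) ^ (a - 1) + χ ^ (a - b) * (2 * c * (n : ℝ) ^ (a - 1)) +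
        c * ((⌊x⌋₊ : ℝ) ^ (a - b) - x ^ (a - b)) := triangle
    _ ≤ 2 * c * (6 / 5 * x ^ (a - 1)) + 2 * c * x ^ (a - 1) + c * (6 / 5 * x ^ (a - 1)) := by
        rw [mul_left_comm]
        gcongr
    _ ≤ 6 * c * x ^ (a - 1) := by
        have : 0 ≤ c * x ^ (a - 1) := by positivity
        linarith

/-- Quantitative comparison between `Γ^{(ℓ)}_{⌊χn⌋}/Γ_{⌊χn⌋}` and
`χ^{-a(ℓ-1)} Γ^{(ℓ)}_n/Γ_n` for the polynomial step sequence `γ_k = γ₁ k^{-a}`. -/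
theorem stmt_16 (γ₁ a : ℝ) (hγ₁ : 0 < γ₁) (ha : a ∈ Set.Ioo (0 : ℝ) 1)
    (χ : ℝ) (hχ : χ ∈ Set.Ioo (0 : ℝ) 1) (ℓ : ℕ) (hℓ : 1 ≤ ℓ) (haℓ : a * ℓ < 1)
    (Γ : ℕ → ℕ → ℝ)
    (hΓ : ∀ L n, Γ L n = ∑ k ∈ Icc 1 n, (γ₁ * (k : ℝ) ^ (-a)) ^ L)
    (n : ℕ) (hn : ⌈(6 : ℝ) ^ (1 / (1 - a)) / χ⌉₊ ≤ n) :
    |Γ ℓ ⌊χ * (n : ℝ)⌋₊ / Γ 1 ⌊χ * (n : ℝ)⌋₊ -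
        χ ^ (-(a * ((ℓ : ℝ) - 1))) * (Γ ℓ n / Γ 1 n)| ≤
      6 * ((2 - a * ℓ) / (1 - a * ℓ)) * γ₁ ^ (ℓ - 1) *
        χ ^ (-1 - a * ((ℓ : ℝ) - 1)) * (n : ℝ) ^ (-(1 - a)) := by
  obtain ⟨ha0, ha1⟩ := ha
  obtain ⟨hχ0, hχ1⟩ := hχ
  have hab : a ≤ a * ℓ := le_mul_of_one_le_right ha0.le (by exact_mod_cast hℓ)
  have hΓ_ratio : ∀ N, Γ ℓ N / Γ 1 N =
      γ₁ ^ (ℓ - 1) * (genHarmonic (a * ℓ) N / genHarmonic a N) := by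
    intro N
    rw [hΓ, hΓ, sum_mul_rpow_neg_pow_eq, sum_mul_rpow_neg_pow_eq, Nat.cast_one, mul_one,
      mul_div_mul_comm, pow_sub₀ γ₁ hγ₁.ne' hℓ, pow_one, div_eq_mul_inv]
  have hn' : (6 : ℝ) ^ (1 / (1 - a)) ≤ χ * n := by
    rw [mul_comm, ← div_le_iff₀ hχ0]
    exact Nat.ceil_le.mp hn
  have core := abs_genHarmonic_div_floor_sub_le ha0.le hab haℓ hχ0 hχ1.le hn'
  have hc : (1 - a) / (1 - a * ℓ) ≤ (2 - a * ℓ) / (1 - a * ℓ) :=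
    div_le_div_of_nonneg_right (by linarith) (by linarith)
  have hc0 : 0 ≤ (2 - a * ℓ) / (1 - a * ℓ) := div_nonneg (by linarith) (by linarith)
  have hχn : (χ * n) ^ (a - 1) ≤ χ ^ (a - a * ℓ - 1) * (n : ℝ) ^ (a - 1) := by
    rw [Real.mul_rpow hχ0.le (Nat.cast_nonneg n)]
    exact mul_le_mul_of_nonneg_right (Real.rpow_le_rpow_of_exponent_ge hχ0 hχ1.le (by linarith))
      (Real.rpow_nonneg (Nat.cast_nonneg n) _)
  rw [hΓ_ratio, hΓ_ratio, show -(a * ((ℓ : ℝ) - 1)) = a - a * ℓ by ring,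
    show -1 - a * ((ℓ : ℝ) - 1) = a - a * ℓ - 1 by ring, neg_sub, mul_left_comm, ← mul_sub,
    abs_mul, abs_of_pos (by positivity)]
  calc γ₁ ^ (ℓ - 1) * |_|
      ≤ γ₁ ^ (ℓ - 1) * (6 * ((1 - a) / (1 - a * ℓ)) * (χ * n) ^ (a - 1)) := by gcongr
    _ ≤ γ₁ ^ (ℓ - 1) * (6 * ((2 - a * ℓ) / (1 - a * ℓ)) *
          (χ ^ (a - a * ℓ - 1) * (n : ℝ) ^ (a - 1))) := by gcongr
    _ = _ := by ring
end

section
/- Let γ₁ > 0 and a ∈ (0,1), γ_k = γ₁ k^{−a}, Γ_n^{(ℓ)} = ∑_{k=1}^{n} γ_k^{ℓ}, Γ_n = Γ_n^{(1)}. Fix integers R ≥ 2 and M ≥ 2 with a(R+1) < 1, reals c₂,…,c_R, positive reals q₁,…,q_R with ∑ q_r = 1, real weights W₁,…,W_R, and set n_r = ⌊q_r n⌋, m_{r,ℓ} = (M^{−(ℓ−1)} − 1) M^{−(r−2)(ℓ−1)}, q* = min_r q_r, ‖W‖_∞ = max_{1≤r≤R} |W_r|, and Bias⁽¹⁾(n)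 = ∑_{ℓ=2}^{R} c_ℓ [ (Γ_{n₁}^{(ℓ)}/Γ_{n₁} − q₁^{−a(ℓ−1)} Γ_n^{(ℓ)}/Γ_n) W₁ + ∑_{r=2}^{R} m_{r,ℓ} W_r (Γ_{n_r}^{(ℓ)}/Γ_{n_r} − q_r^{−a(ℓ−1)} Γ_n^{(ℓ)}/Γ_n) ]. Then for every n ≥ ⌈6^{1/(1−a)}/q*⌉, |Bias⁽¹⁾(n)| ≤ C · n^{−(1−a)}, where C = 6 · ((2 − a(R+1))/(1 − a(R+1))) · ‖W‖_∞ · q*^{−1} · ∑_{ℓ=2}^{R} (γ₁ q*^{−a})^{ℓ−1} (1 + ∑_{r=2}^{R} |m_{r,ℓ}|) |c_ℓ|. -/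
/-!
Write `S_b(m) = ∑_{k=1}^m k^{-b}` (`powSum b m`). Since `Γ_m^{(ℓ)} = γ₁^ℓ S_{aℓ}(m)`, every bracket
of `Bias⁽¹⁾(n)` is `γ₁^{ℓ-1}` times `ρ(⌊q n⌋) - q^{a-b} ρ(n)` with `ρ = S_b / S_a` and `b = aℓ`.
Bernoulli's inequality for the concave map `x ↦ x^{1-b}` pins `(1-b) S_b(m)` between
`m^{1-b} - 1` and `m^{1-b}`, so `ρ(m) = A m^{a-b} + O(A m^{-(1-a)})` with `A = (1-a)/(1-b)`.
The model `A x^{a-b}` is exactly homogeneous, `A (q n)^{a-b} = q^{a-b} A n^{a-b}`, so the bracket is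
controlled by the two approximation errors and by the cost of replacing `q n` with `⌊q n⌋`, each of
order `q*^{a-b-1} n^{-(1-a)}`. The condition on `n` makes `(q* n)^{1-a} ≥ 6`, which keeps all
these estimates in their asymptotic regime.
-/

open Finset

namespace Real

theorem rpow_add_le_rpow_add_mul_rpow_sub_one {p x h : ℝ} (hp0 : 0 ≤ p) (hp1 : p ≤ 1)
    (hx : 0 < x) (hh : -x ≤ h) : (x + h) ^ p ≤ x ^ p + p * x ^ (p - 1) * h := by
  have hs : -1 ≤ h / x := by rwa [le_div_iff₀ hx, neg_one_mul]
  calc (x + h) ^ p = x ^ p * (1 + h / x) ^ p := by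
        rw [← mul_rpow hx.le (by linarith), mul_add, mul_one, mul_div_cancel₀ _ hx.ne']
    _ ≤ x ^ p * (1 + p * (h / x)) :=
        mul_le_mul_of_nonneg_left (rpow_one_add_le_one_add_mul_self hs hp0 hp1) (by positivity)
    _ = x ^ p + p * x ^ (p - 1) * h := by rw [rpow_sub_one hx.ne']; field_simp

theorem rpow_sub_rpow_le_rpow_div {c x y : ℝ} (hc : -1 ≤ c) (hc0 : c ≤ 0) (hy : 0 < y)
    (hyx : y ≤ x) (hxy : x ≤ y + 1) : y ^ c - x ^ c ≤ x ^ c / y := by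
  obtain ⟨p, rfl⟩ : ∃ p, c = -p := ⟨-c, (neg_neg c).symm⟩
  have hx : 0 < x := hy.trans_le hyx
  have tangent := rpow_add_le_rpow_add_mul_rpow_sub_one (h := x - y) (by linarith) (by linarith)
    hy (by linarith)
  rw [add_sub_cancel, rpow_sub_one hy.ne'] at tangent
  have hyp : 0 < y ^ p := rpow_pos_of_pos hy p
  have hxp : 0 < x ^ p := rpow_pos_of_pos hx p
  have tangent' : x ^ p * y ≤ y ^ p * (y + 1) := by
    have hstep : p * (y ^ p / y) * (x - y) * y = y ^ p * (p * (x - y)) := by field_simp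
    nlinarith [mul_le_mul_of_nonneg_left (show p * (x - y) ≤ 1 by nlinarith) hyp.le]
  rw [rpow_neg hy.le, rpow_neg hx.le, inv_sub_inv hyp.ne' hxp.ne',
    div_le_div_iff₀ (by positivity) hy]
  calc (x ^ p - y ^ p) * y ≤ y ^ p := by linarith
    _ = (x ^ p)⁻¹ * (y ^ p * x ^ p) := by field_simp

theorem le_of_le_rpow {x y p : ℝ} (hx : 0 ≤ x) (hp0 : 0 < p) (hp1 : p ≤ 1) (hy : 1 ≤ y)
    (h : y ≤ x ^ p) : y ≤ x := by
  have hx1 : 1 ≤ x := by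
    by_contra! hx1
    linarith [rpow_lt_one hx hx1 hp0]
  exact h.trans (rpow_le_self_of_one_le hx1 hp1)

theorem mul_rpow_le_floor_rpow {x p : ℝ} (hx : 6 ≤ x) (hp0 : 0 ≤ p) (hp1 : p ≤ 1) :
    5 / 6 * x ^ p ≤ (⌊x⌋₊ : ℝ) ^ p := by
  have h56 : (5 / 6 : ℝ) ≤ (5 / 6) ^ p := by
    simpa using rpow_le_rpow_of_exponent_ge (by norm_num : (0 : ℝ) < 5 / 6) (by norm_num) hp1
  calc 5 / 6 * x ^ p ≤ (5 / 6) ^ p * x ^ p := by gcongr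
    _ = (5 / 6 * x) ^ p := (mul_rpow (by norm_num) (by linarith)).symm
    _ ≤ (⌊x⌋₊ : ℝ) ^ p := rpow_le_rpow (by linarith) (by linarith [Nat.sub_one_lt_floor x]) hp0

theorem le_mul_rpow_of_ceil_rpow_div_le {y p qs : ℝ} (hy : 0 ≤ y) (hp : 0 < p) (hqs : 0 < qs)
    {n : ℕ} (hn : ⌈y ^ (1 / p) / qs⌉₊ ≤ n) : y ≤ (qs * n) ^ p := by
  have h := Nat.ceil_le.1 hn
  rw [div_le_iff₀ hqs, mul_comm] at h
  calc y = (y ^ (1 / p)) ^ p := by rw [← rpow_mul hy, one_div_mul_cancel hp.ne', rpow_one]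
    _ ≤ (qs * n) ^ p := rpow_le_rpow (by positivity) h hp.le

end Real

section

open Real

noncomputable def powSum (b : ℝ) (m : ℕ) : ℝ := ∑ k ∈ Icc 1 m, (k : ℝ) ^ (-b)

theorem powSum_succ (b : ℝ) (m : ℕ) : powSum b (m + 1) = powSum b m + ((m : ℝ) + 1) ^ (-b) := by
  rw [powSum, powSum, sum_Icc_succ_top (by omega), Nat.cast_succ]

theorem mul_powSum_le_rpow {b : ℝ} (hb0 : 0 ≤ b) (hb1 : b < 1) (m : ℕ) :
    (1 - b) * powSum b m ≤ (m : ℝ) ^ (1 - b) := by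
  induction m with
  | zero => simpa [powSum] using rpow_nonneg le_rfl (1 - b)
  | succ m ih =>
    have step := rpow_add_le_rpow_add_mul_rpow_sub_one (p := 1 - b) (h := -1) (by linarith)
      (by linarith) (m.cast_add_one_pos (α := ℝ)) (by linarith [m.cast_nonneg (α := ℝ)])
    rw [add_neg_cancel_right, sub_sub_cancel_left] at step
    rw [powSum_succ, Nat.cast_succ]
    linarith

theorem rpow_sub_one_le_mul_powSum {b : ℝ} (hb0 : 0 ≤ b) (hb1 : b < 1) (m : ℕ) :
    (m : ℝ) ^ (1 - b) - 1 ≤ (1 - b) * powSum b m := by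
  have succ_bound : ((m : ℝ) + 1) ^ (1 - b) - 1 ≤ (1 - b) * powSum b m := by
    induction m with
    | zero => simp [powSum]
    | succ m ih =>
      have step := rpow_add_le_rpow_add_mul_rpow_sub_one (p := 1 - b) (h := 1) (by linarith)
        (by linarith) (m.cast_add_one_pos (α := ℝ)) (by linarith [m.cast_nonneg (α := ℝ)])
      rw [sub_sub_cancel_left, mul_one] at step
      rw [powSum_succ, Nat.cast_succ]
      linarith
  have mono : (m : ℝ) ^ (1 - b) ≤ ((m : ℝ) + 1) ^ (1 - b) :=
    rpow_le_rpow m.cast_nonneg (by linarith) (by linarith)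
  linarith

theorem abs_powSum_div_powSum_sub_le {a b : ℝ} (ha : 0 ≤ a) (hab : a ≤ b) (hb : b < 1) {m : ℕ}
    (hm : 2 ≤ (m : ℝ) ^ (1 - a)) :
    |powSum b m / powSum a m - (1 - a) / (1 - b) * (m : ℝ) ^ (a - b)| ≤
      2 * ((1 - a) / (1 - b)) * (m : ℝ) ^ (-(1 - a)) := by
  have h1b : 0 < 1 - b := by linarith
  have hm0 : (0 : ℝ) < m := by
    refine m.cast_nonneg.lt_of_ne fun h => ?_
    rw [← h, zero_rpow (by linarith)] at hm
    norm_num at hm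
  have hs := rpow_sub_one_le_mul_powSum ha (by linarith) m
  have hs' := mul_powSum_le_rpow ha (by linarith) m
  have ht := rpow_sub_one_le_mul_powSum (by linarith) hb m
  have ht' := mul_powSum_le_rpow (by linarith) hb m
  have hwP : (m : ℝ) ^ (a - b) * (m : ℝ) ^ (1 - a) = (m : ℝ) ^ (1 - b) := by
    rw [← rpow_add hm0]; ring_nf
  have hw0 : 0 ≤ (m : ℝ) ^ (a - b) := rpow_nonneg m.cast_nonneg _
  have hw1 : (m : ℝ) ^ (a - b) ≤ 1 :=
    rpow_le_one_of_one_le_of_nonpos (Nat.one_le_cast.mpr (Nat.cast_pos.mp hm0)) (by linarith)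
  set s := powSum a m
  set t := powSum b m
  set P := (m : ℝ) ^ (1 - a)
  set w := (m : ℝ) ^ (a - b)
  have hnum : |(1 - b) * t - (1 - a) * s * w| ≤ 1 := by
    rw [abs_le]
    constructor
    · nlinarith [mul_le_mul_of_nonneg_right hs' hw0]
    · nlinarith [mul_le_mul_of_nonneg_right hs hw0]
  have hs0 : 0 < s := by nlinarith
  calc |t / s - (1 - a) / (1 - b) * w|
      = |(1 - b) * t - (1 - a) * s * w| / ((1 - b) * s) := by
        rw [← abs_of_pos (by positivity : 0 < (1 - b) * s), ← abs_div]
        congr 1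
        field_simp
    _ ≤ 1 / ((1 - b) * s) := by gcongr
    _ ≤ 2 * ((1 - a) / (1 - b)) * P⁻¹ := by
        rw [div_le_iff₀ (by positivity)]
        have : 2 * ((1 - a) / (1 - b)) * P⁻¹ * ((1 - b) * s) = 2 * ((1 - a) * s) / P := by
          field_simp
        rw [this, le_div_iff₀ (by positivity)]
        linarith
    _ = 2 * ((1 - a) / (1 - b)) * (m : ℝ) ^ (-(1 - a)) := by rw [rpow_neg m.cast_nonneg]

theorem abs_powSum_div_powSum_floor_sub_le {a b x : ℝ} (ha : 0 ≤ a) (hab : a ≤ b) (hb : b < 1)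
    (hx0 : 0 ≤ x) (hx : 6 ≤ x ^ (1 - a)) :
    |powSum b ⌊x⌋₊ / powSum a ⌊x⌋₊ - (1 - a) / (1 - b) * x ^ (a - b)| ≤
      (1 - a) / (1 - b) * (12 / 5 * x ^ (-(1 - a)) + 6 / 5 * x ^ (a - b - 1)) := by
  set A := (1 - a) / (1 - b)
  set m := ⌊x⌋₊
  have hA : 0 ≤ A := div_nonneg (by linarith) (by linarith)
  have hx6 : 6 ≤ x := le_of_le_rpow hx0 (by linarith) (by linarith) (by norm_num) hx
  have hm_le : (m : ℝ) ≤ x := Nat.floor_le hx0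
  have hm_ge : 5 / 6 * x ≤ m := by linarith [Nat.sub_one_lt_floor x]
  have hm_rpow := mul_rpow_le_floor_rpow hx6 (by linarith : 0 ≤ 1 - a) (by linarith)
  have hm_neg : (m : ℝ) ^ (-(1 - a)) ≤ 6 / 5 * x ^ (-(1 - a)) := by
    rw [rpow_neg m.cast_nonneg, rpow_neg hx0]
    calc ((m : ℝ) ^ (1 - a))⁻¹ ≤ (5 / 6 * x ^ (1 - a))⁻¹ := inv_anti₀ (by positivity) hm_rpow
      _ = 6 / 5 * (x ^ (1 - a))⁻¹ := by rw [mul_inv]; norm_num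
  have at_floor : |powSum b m / powSum a m - A * (m : ℝ) ^ (a - b)| ≤
      A * (12 / 5 * x ^ (-(1 - a))) := by
    calc _ ≤ 2 * A * (m : ℝ) ^ (-(1 - a)) :=
          abs_powSum_div_powSum_sub_le ha hab hb (by linarith)
      _ ≤ 2 * A * (6 / 5 * x ^ (-(1 - a))) := by gcongr
      _ = _ := by ring
  have floor_shift : (m : ℝ) ^ (a - b) - x ^ (a - b) ≤ 6 / 5 * x ^ (a - b - 1) :=
    calc _ ≤ x ^ (a - b) / m := rpow_sub_rpow_le_rpow_div (by linarith) (by linarith)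
          (by linarith) hm_le (by linarith [Nat.sub_one_lt_floor x])
      _ ≤ x ^ (a - b) / (5 / 6 * x) := by gcongr
      _ = 6 / 5 * x ^ (a - b - 1) := by rw [rpow_sub_one (by linarith)]; field_simp
  have floor_shift_nonneg : 0 ≤ (m : ℝ) ^ (a - b) - x ^ (a - b) :=
    sub_nonneg.2 (rpow_le_rpow_of_nonpos (by linarith) hm_le (by linarith))
  calc _ = |(powSum b m / powSum a m - A * (m : ℝ) ^ (a - b)) +
          A * ((m : ℝ) ^ (a - b) - x ^ (a - b))| := by
        congr 1
        ring
    _ ≤ _ := abs_add_le _ _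
    _ ≤ A * (12 / 5 * x ^ (-(1 - a))) + A * (6 / 5 * x ^ (a - b - 1)) := by
        rw [abs_mul, abs_of_nonneg hA, abs_of_nonneg floor_shift_nonneg]
        gcongr
    _ = _ := by ring

theorem abs_powSum_ratio_floor_sub_le {a b q qs : ℝ} (ha : 0 ≤ a) (hab : a ≤ b) (hb : b < 1)
    (hqs : 0 < qs) (hqsq : qs ≤ q) (hq1 : q ≤ 1) {n : ℕ} (hn : 6 ≤ (qs * n) ^ (1 - a)) :
    |powSum b ⌊q * n⌋₊ / powSum a ⌊q * n⌋₊ - q ^ (a - b) * (powSum b n / powSum a n)| ≤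
      6 * ((1 - a) / (1 - b)) * qs ^ (a - b - 1) * (n : ℝ) ^ (-(1 - a)) := by
  set A := (1 - a) / (1 - b)
  set x := q * (n : ℝ)
  have hA : 0 ≤ A := div_nonneg (by linarith) (by linarith)
  have hqsn_le : qs * n ≤ x := mul_le_mul_of_nonneg_right hqsq n.cast_nonneg
  have hx_le : x ≤ n := mul_le_of_le_one_left n.cast_nonneg hq1
  have hx0 : 0 ≤ x := (by positivity : 0 ≤ qs * n).trans hqsn_le
  have hx_rpow : 6 ≤ x ^ (1 - a) := hn.trans (rpow_le_rpow (by positivity) hqsn_le (by linarith))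
  have hn_rpow : 6 ≤ (n : ℝ) ^ (1 - a) := hx_rpow.trans (rpow_le_rpow hx0 hx_le (by linarith))
  have hn1 : (1 : ℝ) ≤ n :=
    le_of_le_rpow n.cast_nonneg (by linarith) (by linarith) le_rfl
      (by linarith : 1 ≤ (n : ℝ) ^ (1 - a))
  have hx_pow : ∀ e : ℝ, a - b - 1 ≤ e → e ≤ -(1 - a) →
      x ^ e ≤ qs ^ (a - b - 1) * (n : ℝ) ^ (-(1 - a)) := fun e he₁ he₂ =>
    calc x ^ e ≤ (qs * n) ^ e :=
          rpow_le_rpow_of_nonpos (by positivity) hqsn_le (by linarith)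
      _ = qs ^ e * (n : ℝ) ^ e := mul_rpow hqs.le n.cast_nonneg
      _ ≤ qs ^ (a - b - 1) * (n : ℝ) ^ (-(1 - a)) :=
          mul_le_mul (rpow_le_rpow_of_exponent_ge hqs (hqsq.trans hq1) he₁)
            (rpow_le_rpow_of_exponent_le hn1 he₂) (by positivity) (by positivity)
  have hq_pow : q ^ (a - b) ≤ qs ^ (a - b - 1) :=
    (rpow_le_rpow_of_nonpos hqs hqsq (by linarith)).trans
      (rpow_le_rpow_of_exponent_ge hqs (hqsq.trans hq1) (by linarith))
  have at_floor := abs_powSum_div_powSum_floor_sub_le ha hab hb hx0 hx_rpow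
  have at_n := abs_powSum_div_powSum_sub_le ha hab hb (m := n) (by linarith)
  have hsplit : x ^ (a - b) = q ^ (a - b) * (n : ℝ) ^ (a - b) :=
    mul_rpow (by linarith) n.cast_nonneg
  calc _ = |(powSum b ⌊x⌋₊ / powSum a ⌊x⌋₊ - A * x ^ (a - b)) +
          q ^ (a - b) * (A * (n : ℝ) ^ (a - b) - powSum b n / powSum a n)| := by
        rw [hsplit]
        congr 1
        ring
    _ ≤ _ := abs_add_le _ _
    _ ≤ A * (12 / 5 * (qs ^ (a - b - 1) * (n : ℝ) ^ (-(1 - a))) +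
          6 / 5 * (qs ^ (a - b - 1) * (n : ℝ) ^ (-(1 - a)))) +
        qs ^ (a - b - 1) * (2 * A * (n : ℝ) ^ (-(1 - a))) := by
        rw [abs_mul, abs_of_nonneg (rpow_nonneg (by linarith) _),
          abs_sub_comm (A * (n : ℝ) ^ (a - b))]
        refine add_le_add (at_floor.trans ?_)
          (mul_le_mul hq_pow at_n (abs_nonneg _) (by positivity))
        gcongr
        · exact hx_pow _ (by linarith) le_rfl
        · exact hx_pow _ le_rfl (by linarith)
    _ ≤ _ := by
        have : 0 ≤ A * qs ^ (a - b - 1) * (n : ℝ) ^ (-(1 - a)) := by positivity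
        linarith

/-- The paper's `Γ_n^{(L)}` for the steps `γ_k = γ₁ k^{-a}`. -/
noncomputable def stepPowSum (γ₁ a : ℝ) (L n : ℕ) : ℝ := ∑ k ∈ Icc 1 n, (γ₁ * (k : ℝ) ^ (-a)) ^ L

theorem stepPowSum_eq (γ₁ a : ℝ) (L n : ℕ) : stepPowSum γ₁ a L n = γ₁ ^ L * powSum (a * L) n := by
  rw [stepPowSum, powSum, mul_sum]
  refine sum_congr rfl fun k _ => ?_
  rw [mul_pow, ← rpow_natCast ((k : ℝ) ^ (-a)), ← rpow_mul k.cast_nonneg, neg_mul]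

theorem stepPowSum_div_stepPowSum_one {γ₁ : ℝ} (hγ₁ : γ₁ ≠ 0) (a : ℝ) {L : ℕ} (hL : 1 ≤ L) (n : ℕ) :
    stepPowSum γ₁ a L n / stepPowSum γ₁ a 1 n = γ₁ ^ (L - 1) * (powSum (a * L) n / powSum a n) := by
  rw [stepPowSum_eq, stepPowSum_eq, Nat.cast_one, mul_one, mul_div_mul_comm, pow_sub₀ γ₁ hγ₁ hL,
    div_eq_mul_inv]

theorem abs_stepPowSum_ratio_floor_sub_le {γ₁ a q qs : ℝ} (hγ₁ : 0 < γ₁) (ha : 0 ≤ a) {ℓ : ℕ}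
    (hℓ : 1 ≤ ℓ) (haℓ : a * ℓ < 1) (hqs : 0 < qs) (hqsq : qs ≤ q) (hq1 : q ≤ 1) {n : ℕ}
    (hn : 6 ≤ (qs * n) ^ (1 - a)) :
    |stepPowSum γ₁ a ℓ ⌊q * n⌋₊ / stepPowSum γ₁ a 1 ⌊q * n⌋₊ -
        q ^ (-(a * ((ℓ : ℝ) - 1))) * (stepPowSum γ₁ a ℓ n / stepPowSum γ₁ a 1 n)| ≤
      6 * ((1 - a) / (1 - a * ℓ)) * qs⁻¹ * (γ₁ * qs ^ (-a)) ^ (ℓ - 1) * (n : ℝ) ^ (-(1 - a)) := by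
  have hℓa : a ≤ a * ℓ := le_mul_of_one_le_right ha (by exact_mod_cast hℓ)
  have key := abs_powSum_ratio_floor_sub_le ha hℓa haℓ hqs hqsq hq1 hn
  have hexp : -(a * ((ℓ : ℝ) - 1)) = a - a * ℓ := by ring
  have hqs_pow : qs⁻¹ * (γ₁ * qs ^ (-a)) ^ (ℓ - 1) = γ₁ ^ (ℓ - 1) * qs ^ (a - a * ℓ - 1) := by
    rw [mul_pow, ← rpow_natCast (qs ^ (-a)), ← rpow_mul hqs.le, Nat.cast_sub hℓ,
      rpow_sub_one hqs.ne']
    push_cast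
    ring_nf
  rw [stepPowSum_div_stepPowSum_one hγ₁.ne' a hℓ, stepPowSum_div_stepPowSum_one hγ₁.ne' a hℓ, hexp,
    ← mul_left_comm, ← mul_sub, abs_mul, abs_of_pos (pow_pos hγ₁ _)]
  calc _ ≤ γ₁ ^ (ℓ - 1) *
        (6 * ((1 - a) / (1 - a * ℓ)) * qs ^ (a - a * ℓ - 1) * (n : ℝ) ^ (-(1 - a))) :=
        mul_le_mul_of_nonneg_left key (pow_pos hγ₁ _).le
    _ = _ := by rw [mul_assoc _ qs⁻¹, hqs_pow]; ring

end

theorem one_sub_div_one_sub_le_two_sub_div_one_sub {a y x : ℝ} (ha : 0 ≤ a) (hyx : y ≤ x)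
    (hx : x < 1) : (1 - a) / (1 - y) ≤ (2 - x) / (1 - x) := by
  rw [div_le_div_iff₀ (by linarith) (by linarith)]
  nlinarith

theorem abs_sum_mul_add_sum_le {ι κ : Type*} (s : Finset ι) (t : Finset κ) (c D₀ B : ι → ℝ)
    (w₀ K : ℝ) (μ D : ι → κ → ℝ) (w : κ → ℝ) (hD₀ : ∀ i ∈ s, |D₀ i| ≤ B i)
    (hD : ∀ i ∈ s, ∀ j ∈ t, |D i j| ≤ B i) (hw₀ : |w₀| ≤ K) (hw : ∀ j ∈ t, |w j| ≤ K) :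
    |∑ i ∈ s, c i * (D₀ i * w₀ + ∑ j ∈ t, μ i j * w j * D i j)| ≤
      ∑ i ∈ s, K * B i * (1 + ∑ j ∈ t, |μ i j|) * |c i| := by
  refine (abs_sum_le_sum_abs _ _).trans (sum_le_sum fun i hi => ?_)
  have hB : 0 ≤ B i := (abs_nonneg _).trans (hD₀ i hi)
  have hK : 0 ≤ K := (abs_nonneg _).trans hw₀
  have inner : |D₀ i * w₀ + ∑ j ∈ t, μ i j * w j * D i j| ≤ K * B i * (1 + ∑ j ∈ t, |μ i j|) :=
    calc _ ≤ |D₀ i * w₀| + ∑ j ∈ t, |μ i j * w j * D i j| :=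
          (abs_add_le _ _).trans (add_le_add_right (abs_sum_le_sum_abs _ _) _)
      _ ≤ B i * K + ∑ j ∈ t, |μ i j| * (K * B i) := by
          gcongr with j hj
          · rw [abs_mul]
            exact mul_le_mul (hD₀ i hi) hw₀ (abs_nonneg _) hB
          · rw [abs_mul, abs_mul, mul_assoc]
            gcongr
            exacts [hw j hj, hD i hi j hj]
      _ = _ := by rw [← sum_mul]; ring
  rw [abs_mul, mul_comm]
  exact mul_le_mul_of_nonneg_right inner (abs_nonneg _)

/-- Bound on the first bias term `Bias⁽¹⁾(n)` of the ML2Rgodic estimator: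
`|Bias⁽¹⁾(n)| ≤ C_{a,q,R} n^{-(1-a)}` for `n ≥ ⌈6^{1/(1-a)}/q*⌉`. -/
theorem stmt_18 (γ₁ a : ℝ) (hγ₁ : 0 < γ₁) (ha : a ∈ Set.Ioo (0 : ℝ) 1)
    (R M : ℕ) (hR : 2 ≤ R) (haR : a * ((R : ℝ) + 1) < 1)
    (c : ℕ → ℝ) (W : ℕ → ℝ)
    (q : ℕ → ℝ) (hq : ∀ r ∈ Icc 1 R, 0 < q r) (hqsum : ∑ r ∈ Icc 1 R, q r = 1)
    (Γ : ℕ → ℕ → ℝ)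
    (hΓ : ∀ L n, Γ L n = ∑ k ∈ Icc 1 n, (γ₁ * (k : ℝ) ^ (-a)) ^ L)
    (qstar Wsup : ℝ)
    (hqstar : qstar = (Icc 1 R).inf' (Finset.nonempty_Icc.mpr (by omega)) q)
    (hWsup : Wsup = (Icc 1 R).sup' (Finset.nonempty_Icc.mpr (by omega)) (fun r => |W r|))
    (n : ℕ) (hn : ⌈(6 : ℝ) ^ (1 / (1 - a)) / qstar⌉₊ ≤ n) :
    |∑ ℓ ∈ Icc 2 R, c ℓ *
      ((Γ ℓ ⌊q 1 * (n : ℝ)⌋₊ / Γ 1 ⌊q 1 * (n : ℝ)⌋₊ -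
          q 1 ^ (-(a * ((ℓ : ℝ) - 1))) * (Γ ℓ n / Γ 1 n)) * W 1 +
        ∑ r ∈ Icc 2 R,
          ((M : ℝ) ^ (-((ℓ : ℝ) - 1)) - 1) * (M : ℝ) ^ (-(((r : ℝ) - 2) * ((ℓ : ℝ) - 1))) *
            W r *
            (Γ ℓ ⌊q r * (n : ℝ)⌋₊ / Γ 1 ⌊q r * (n : ℝ)⌋₊ -
              q r ^ (-(a * ((ℓ : ℝ) - 1))) * (Γ ℓ n / Γ 1 n)))| ≤
      (6 * ((2 - a * ((R : ℝ) + 1)) / (1 - a * ((R : ℝ) + 1))) * Wsup * qstar⁻¹ *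
        ∑ ℓ ∈ Icc 2 R, (γ₁ * qstar ^ (-a)) ^ (ℓ - 1) *
          (1 + ∑ r ∈ Icc 2 R,
            |((M : ℝ) ^ (-((ℓ : ℝ) - 1)) - 1) *
              (M : ℝ) ^ (-(((r : ℝ) - 2) * ((ℓ : ℝ) - 1)))|) * |c ℓ|) *
        (n : ℝ) ^ (-(1 - a)) := by
  obtain ⟨ha0, ha1⟩ := ha
  obtain rfl : Γ = stepPowSum γ₁ a := funext fun L => funext fun n => hΓ L n
  have h1R : 1 ∈ Icc 1 R := mem_Icc.2 ⟨le_rfl, by omega⟩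
  have hqs_pos : 0 < qstar := by rw [hqstar, lt_inf'_iff]; exact hq
  have hqs_le : ∀ r ∈ Icc 1 R, qstar ≤ q r := fun r hr => hqstar ▸ inf'_le q hr
  have hq_le_one : ∀ r ∈ Icc 1 R, q r ≤ 1 := fun r hr =>
    hqsum ▸ single_le_sum (fun i hi => (hq i hi).le) hr
  have hW_le : ∀ r ∈ Icc 1 R, |W r| ≤ Wsup := fun r hr => hWsup ▸ le_sup' (fun r => |W r|) hr
  have hn6 := Real.le_mul_rpow_of_ceil_rpow_div_le (by norm_num) (by linarith) hqs_pos hn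
  have hpair : ∀ ℓ ∈ Icc 2 R, ∀ r ∈ Icc 1 R,
      |stepPowSum γ₁ a ℓ ⌊q r * n⌋₊ / stepPowSum γ₁ a 1 ⌊q r * n⌋₊ -
          q r ^ (-(a * ((ℓ : ℝ) - 1))) * (stepPowSum γ₁ a ℓ n / stepPowSum γ₁ a 1 n)| ≤
        6 * ((2 - a * ((R : ℝ) + 1)) / (1 - a * ((R : ℝ) + 1))) * qstar⁻¹ *
          (γ₁ * qstar ^ (-a)) ^ (ℓ - 1) * (n : ℝ) ^ (-(1 - a)) := by
    intro ℓ hℓ r hr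
    obtain ⟨hℓ2, hℓR⟩ := mem_Icc.1 hℓ
    have haℓ : a * ℓ ≤ a * ((R : ℝ) + 1) := by
      gcongr
      exact (Nat.cast_le.2 hℓR).trans (le_add_of_nonneg_right zero_le_one)
    refine (abs_stepPowSum_ratio_floor_sub_le hγ₁ ha0.le (one_le_two.trans hℓ2) (by linarith)
      hqs_pos (hqs_le r hr) (hq_le_one r hr) hn6).trans ?_
    gcongr 6 * ?_ * _ * _ * _
    exact one_sub_div_one_sub_le_two_sub_div_one_sub ha0.le haℓ haR
  refine (abs_sum_mul_add_sum_le _ _ _ _ _ _ _ _ _ _ (fun ℓ hℓ => hpair ℓ hℓ 1 h1R)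
    (fun ℓ hℓ r hr => hpair ℓ hℓ r (Icc_subset_Icc_left one_le_two hr)) (hW_le 1 h1R)
    (fun r hr => hW_le r (Icc_subset_Icc_left one_le_two hr))).trans (le_of_eq ?_)
  rw [mul_sum, sum_mul]
  exact sum_congr rfl fun ℓ _ => by ring
end
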